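/- arXiv:1406.4089 — 7 statements merged into one kernel-verified Lean document; each statement's English description precedes it below -/
import Mathlib

section
/- For even positive integers q and M, the number of pairs (M₂, c) where M₂ is a perfect matching of {1,…,q} and c is an M-coloring of {1,…,q} that is constant on every connected component of the graph with edge set M₀ ∪ M₂ (M₀ the canonical matching {{1,2},{3,4},…,{q−1,q}}), equals (M+q−2)!!/(M−2)!! = (M+q−2)(M+q−4)⋯(M+2)M. -/
/-!
Adding one edge `{(none, true), (none, false)}` of `M₀` to the vertex set `α × Bool` gives a
bijection `MatchingColoring (Option α) κ ≃ MatchingColoring α κ × (κ ⊕ α × Bool)`: the two new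
vertices are either matched to each other, forming a new cycle with a free colour, or the new
edge is spliced into one of the `2 |α|` oriented edges of the old matching, joining an existing
cycle and inheriting its colour. So each edge of `M₀` multiplies the count by `M + 2 |α|`.
-/

open Finset Function

variable {α β κ : Type*}

/-- A perfect matching `f` of `α × Bool` is a fixed-point-free involution, and `M₀` pairs
`(a, b)` with `(a, !b)`; `c` is constant on the cycles of `M₀ ∪ f` iff it is invariant under
both. -/
def IsMatchingColoring (f : α × Bool → α × Bool) (c : α × Bool → κ) : Prop :=
  (∀ v, f (f v) = v) ∧ (∀ v, f v ≠ v) ∧ (∀ v, c (f v) = c v) ∧ ∀ v, c (v.1, !v.2) = c v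

abbrev MatchingColoring (α κ : Type*) :=
  {p : (α × Bool → α × Bool) × (α × Bool → κ) // IsMatchingColoring p.1 p.2}

theorem IsMatchingColoring.conj {f : α × Bool → α × Bool} {c : α × Bool → κ}
    (h : IsMatchingColoring f c) {s : α × Bool → α × Bool} (hs : Involutive s)
    (hcs : ∀ v, c (s v) = c v) : IsMatchingColoring (s ∘ f ∘ s) c := by
  obtain ⟨hinv, hfix, hcf, hflip⟩ := h
  refine ⟨fun v => ?_, fun v hv => hfix (s v) ?_, fun v => ?_, hflip⟩
  · simp only [comp_apply, hs _, hinv]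
  · exact (hs (f (s v))).symm.trans (congrArg s hv)
  · simp only [comp_apply, hcs, hcf]

theorem IsMatchingColoring.conj_swap [DecidableEq α] {f : α × Bool → α × Bool}
    {c : α × Bool → κ} (h : IsMatchingColoring f c) {a b : α × Bool} (hab : c a = c b) :
    IsMatchingColoring (Equiv.swap a b ∘ f ∘ Equiv.swap a b) c := by
  refine h.conj (Equiv.swap_apply_self a b) fun v => ?_
  rw [Equiv.swap_apply_def]
  split_ifs with ha hb <;> simp [*]

theorem IsMatchingColoring.map {f : α × Bool → α × Bool} {c : α × Bool → κ}
    (h : IsMatchingColoring f c) (e : α ≃ β) :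
    IsMatchingColoring (Prod.map e id ∘ f ∘ Prod.map e.symm id) (c ∘ Prod.map e.symm id) := by
  obtain ⟨hinv, hfix, hcf, hflip⟩ := h
  refine ⟨fun v => ?_, fun v hv => hfix (Prod.map e.symm id v) ?_, fun v => ?_, fun v => ?_⟩
  · simp [Prod.map_map, hinv]
  · simpa [Prod.map_map] using congrArg (Prod.map e.symm id) hv
  · simp [Prod.map_map, hcf]
  · simpa using hflip (Prod.map e.symm id v)

theorem card_matchingColoring_congr (e : α ≃ β) :
    Nat.card (MatchingColoring α κ) = Nat.card (MatchingColoring β κ) :=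
  Nat.card_congr
    { toFun p := ⟨(Prod.map e id ∘ p.1.1 ∘ Prod.map e.symm id, p.1.2 ∘ Prod.map e.symm id),
        p.2.map e⟩
      invFun p := ⟨(Prod.map e.symm id ∘ p.1.1 ∘ Prod.map e id, p.1.2 ∘ Prod.map e id),
        p.2.map e.symm⟩
      left_inv p := by ext ⟨a, b⟩ <;> simp
      right_inv p := by ext ⟨a, b⟩ <;> simp }

def extendMatching (f : α × Bool → α × Bool) : Option α × Bool → Option α × Bool
  | (none, b) => (none, !b)
  | (some a, b) => (some (f (a, b)).1, (f (a, b)).2)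

def extendColoring (c : α × Bool → κ) (m : κ) : Option α × Bool → κ
  | (none, _) => m
  | (some a, b) => c (a, b)

/-- The fallback value `v` is never reached when `f` matches the two new vertices together. -/
def restrictMatching (f : Option α × Bool → Option α × Bool) (v : α × Bool) : α × Bool :=
  match f (some v.1, v.2) with
  | (some a, b) => (a, b)
  | (none, _) => v

theorem forall_option_prod {P : Option α × Bool → Prop} :
    (∀ v, P v) ↔ (∀ b, P (none, b)) ∧ ∀ v : α × Bool, P (some v.1, v.2) := by
  refine ⟨fun h => ⟨fun b => h _, fun v => h _⟩, fun ⟨hn, hs⟩ => ?_⟩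
  rintro ⟨_ | a, b⟩
  exacts [hn b, hs (a, b)]

@[simp]
theorem restrictMatching_extendMatching (f : α × Bool → α × Bool) :
    restrictMatching (extendMatching f) = f := by
  funext v
  simp [restrictMatching, extendMatching]

theorem isMatchingColoring_extend_iff {f : α × Bool → α × Bool} {c : α × Bool → κ} {m : κ} :
    IsMatchingColoring (extendMatching f) (extendColoring c m) ↔ IsMatchingColoring f c := by
  simp only [IsMatchingColoring, forall_option_prod (α := α), extendMatching, extendColoring]
  simp [Prod.ext_iff]

theorem extendMatching_restrictMatching {f : Option α × Bool → Option α × Bool}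
    (hinv : ∀ v, f (f v) = v) (htop : f (none, true) = (none, false)) :
    extendMatching (restrictMatching f) = f := by
  have hbot : f (none, false) = (none, true) := by rw [← htop, hinv]
  funext v
  rcases v with ⟨_ | a, b⟩
  · cases b <;> simp [extendMatching, htop, hbot]
  · rcases hfv : f (some a, b) with ⟨_ | a', b'⟩
    · have := hinv (some a, b)
      cases b' <;> simp [hfv, htop, hbot] at this
    · simp [extendMatching, restrictMatching, hfv]

theorem extendColoring_restrict {c : Option α × Bool → κ} (hflip : ∀ v, c (v.1, !v.2) = c v) :
    extendColoring (fun v => c (some v.1, v.2)) (c (none, true)) = c := by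
  funext v
  rcases v with ⟨_ | a, _ | _⟩
  exacts [(hflip (none, true)).symm, rfl, rfl, rfl]

theorem IsMatchingColoring.restrict {f : Option α × Bool → Option α × Bool}
    {c : Option α × Bool → κ} (h : IsMatchingColoring f c)
    (htop : f (none, true) = (none, false)) :
    IsMatchingColoring (restrictMatching f) (fun v => c (some v.1, v.2)) := by
  rw [← isMatchingColoring_extend_iff (m := c (none, true)),
    extendMatching_restrictMatching h.1 htop, extendColoring_restrict h.2.2.2]
  exact h

theorem eq_of_extend_eq {p q : MatchingColoring α κ} {m m' : κ}
    (hf : extendMatching p.1.1 = extendMatching q.1.1)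
    (hc : extendColoring p.1.2 m = extendColoring q.1.2 m') : p = q ∧ m = m' := by
  have hpf : p.1.1 = q.1.1 := by
    rw [← restrictMatching_extendMatching p.1.1, hf, restrictMatching_extendMatching]
  have hpc : p.1.2 = q.1.2 := funext fun v => congrFun hc (some v.1, v.2)
  exact ⟨Subtype.ext (Prod.ext hpf hpc), congrFun hc (none, true)⟩

section
variable [DecidableEq α]

/-- For `inr v`, conjugating by the swap replaces the edges `{(none, true), (none, false)}` and
`{v, f v}` by `{(none, true), v}` and `{(none, false), f v}`. -/
def insertEdge : MatchingColoring α κ × (κ ⊕ α × Bool) → MatchingColoring (Option α) κ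
  | (p, .inl m) => ⟨(extendMatching p.1.1, extendColoring p.1.2 m),
      isMatchingColoring_extend_iff.2 p.2⟩
  | (p, .inr v) => ⟨(Equiv.swap (none, false) (some v.1, v.2) ∘ extendMatching p.1.1 ∘
      Equiv.swap (none, false) (some v.1, v.2), extendColoring p.1.2 (p.1.2 v)),
      (isMatchingColoring_extend_iff.2 p.2).conj_swap rfl⟩

theorem insertEdge_inl_top (p : MatchingColoring α κ) (m : κ) :
    (insertEdge (p, .inl m)).1.1 (none, true) = (none, false) := rfl

theorem insertEdge_inr_top (p : MatchingColoring α κ) (v : α × Bool) :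
    (insertEdge (p, .inr v)).1.1 (none, true) = (some v.1, v.2) := by
  simp [insertEdge, Equiv.swap_apply_of_ne_of_ne, extendMatching]

theorem insertEdge_injective : Injective (insertEdge (α := α) (κ := κ)) := by
  rintro ⟨p, m | v⟩ ⟨q, m' | v'⟩ h
  · obtain ⟨rfl, rfl⟩ := eq_of_extend_eq (congrArg (·.1.1) h) (congrArg (·.1.2) h)
    rfl
  · simpa [insertEdge_inl_top, insertEdge_inr_top] using congrArg (·.1.1 (none, true)) h
  · simpa [insertEdge_inl_top, insertEdge_inr_top] using congrArg (·.1.1 (none, true)) h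
  · obtain rfl : v = v' := by
      simpa [insertEdge_inr_top, Prod.ext_iff] using congrArg (·.1.1 (none, true)) h
    have hf := congrArg (fun r => Equiv.swap (none, false) (some v.1, v.2) ∘ r.1.1 ∘
      Equiv.swap (none, false) (some v.1, v.2)) h
    simp only [insertEdge, comp_def, Equiv.swap_apply_self] at hf
    obtain ⟨rfl, -⟩ := eq_of_extend_eq hf (congrArg (·.1.2) h)
    rfl

theorem insertEdge_surjective : Surjective (insertEdge (α := α) (κ := κ)) := by
  rintro ⟨⟨f, c⟩, h : IsMatchingColoring f c⟩
  obtain ⟨hinv, hfix, hcf, hflip⟩ := id h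
  have hctop : c (f (none, true)) = c (none, true) := hcf _
  rcases hw : f (none, true) with ⟨_ | a, b⟩
  · obtain rfl : b = false := by
      cases b
      · rfl
      · exact absurd hw (hfix _)
    refine ⟨(⟨(restrictMatching f, fun v => c (some v.1, v.2)), h.restrict hw⟩,
      .inl (c (none, true))), ?_⟩
    simp only [insertEdge, extendMatching_restrictMatching hinv hw, extendColoring_restrict hflip]
  · set s := Equiv.swap ((none, false) : Option α × Bool) (some a, b)
    have hg : IsMatchingColoring (s ∘ f ∘ s) c :=
      h.conj_swap (by rw [← hw, hctop]; exact hflip (none, true))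
    have hgtop : (s ∘ f ∘ s) (none, true) = (none, false) := by
      simp [s, Equiv.swap_apply_of_ne_of_ne, hw]
    refine ⟨(⟨(restrictMatching (s ∘ f ∘ s), fun v => c (some v.1, v.2)), hg.restrict hgtop⟩,
      .inr (a, b)), ?_⟩
    rw [hw] at hctop
    simp only [insertEdge, extendMatching_restrictMatching hg.1 hgtop, hctop,
      extendColoring_restrict hflip]
    refine Subtype.ext (Prod.ext (funext fun x => ?_) rfl)
    simp [s, Equiv.swap_apply_self]

end

theorem card_matchingColoring_option [Finite α] [Finite κ] :
    Nat.card (MatchingColoring (Option α) κ) =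
      Nat.card (MatchingColoring α κ) * (Nat.card κ + 2 * Nat.card α) := by
  classical
  rw [← Nat.card_congr (Equiv.ofBijective _ ⟨insertEdge_injective, insertEdge_surjective⟩),
    Nat.card_prod, Nat.card_sum, Nat.card_prod, Nat.card_eq_fintype_card (α := Bool),
    Fintype.card_bool, mul_comm (Nat.card α)]

theorem card_matchingColoring [Finite α] [Finite κ] :
    Nat.card (MatchingColoring α κ) = ∏ k ∈ range (Nat.card α), (Nat.card κ + 2 * k) := by
  induction α using Finite.induction_empty_option with
  | of_equiv e ih => rw [← card_matchingColoring_congr e, ih, Nat.card_congr e]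
  | h_empty =>
    rw [Nat.card_of_isEmpty (α := PEmpty), range_zero, prod_empty, Nat.card_eq_one_iff_unique]
    refine ⟨inferInstance, ⟨⟨(id, fun v => v.1.elim), ?_⟩⟩⟩
    simp [IsMatchingColoring]
  | h_option ih => rw [card_matchingColoring_option, ih, Finite.card_option, prod_range_succ]

theorem matching_coloring_count_general (n M : ℕ) :
    Nat.card {p : (Fin n × Bool → Fin n × Bool) × (Fin n × Bool → Fin M) //
      (∀ v, p.1 (p.1 v) = v) ∧ (∀ v, p.1 v ≠ v) ∧
      (∀ v, p.2 (p.1 v) = p.2 v) ∧ (∀ v, p.2 (v.1, !v.2) = p.2 v)} =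
    ∏ k ∈ Finset.range n, (M + 2 * k) := by
  have := card_matchingColoring (α := Fin n) (κ := Fin M)
  rwa [Nat.card_fin, Nat.card_fin] at this

/-- Counting pairs `(M₂, c)` of a perfect matching `M₂` of a set of `q = 2n` vertices
(encoded as `Fin n × Bool`, with canonical matching `M₀` pairing `(k, b)` with `(k, !b)`)
together with an `M`-coloring `c` that is constant on each connected component of the
graph with edge set `M₀ ∪ M₂`: the count is `(M+q-2)!!/(M-2)!! = ∏_{k<n} (M + 2k)`.
A perfect matching is encoded as a fixed-point-free involution, and constancy on components
is equivalent to invariance of `c` under both involutions. -/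
theorem matching_coloring_count (n M : ℕ) (hn : 0 < n) (hM : 0 < M) (hMeven : Even M) :
    Nat.card {p : (Fin n × Bool → Fin n × Bool) × (Fin n × Bool → Fin M) //
      (∀ v, p.1 (p.1 v) = v) ∧ (∀ v, p.1 v ≠ v) ∧
      (∀ v, p.2 (p.1 v) = p.2 v) ∧ (∀ v, p.2 (v.1, !v.2) = p.2 v)} =
    ∏ k ∈ Finset.range n, (M + 2 * k) :=
  matching_coloring_count_general n M
end

section
/- Let S ⊆ (I × J × [M])^q be the set of q-tuples {(i_v, j_v, m_v)}_{v=1}^q such that for every v, both sets {v' : (i_{v'}, m_{v'}) = (i_v, m_v)} and {v' : (j_{v'}, m_{v'}) = (j_v, m_v)} have even cardinality. Then |S| ≤ |I|^{q/2} |J|^{q/2} (q−1)!! · (M+q−2)!!/(M−2)!! for even q and even M. -/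
open Finset

instance decInvolutive {α : Type*} [Fintype α] [DecidableEq α] (p : α → α) :
    Decidable (Function.Involutive p) :=
  decidable_of_iff (∀ x, p (p x) = x) Iff.rfl

section Helpers

variable {α : Type*} [Fintype α] [DecidableEq α]

lemma card_ne_pair (a b : α) (hab : a ≠ b) :
    Fintype.card {x : α // x ≠ a ∧ x ≠ b} = Fintype.card α - 2 := by
  rw [Fintype.card_subtype]
  have : (univ.filter fun x : α => x ≠ a ∧ x ≠ b) = (univ.erase a).erase b := by
    ext x; simp [and_comm]
  rw [this, card_erase_of_mem (by simp [Ne.symm hab]), card_erase_of_mem (by simp)]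
  simp only [Finset.card_univ]
  omega

lemma card_ne_single (a : α) :
    Fintype.card {x : α // x ≠ a} = Fintype.card α - 1 := by
  rw [Fintype.card_subtype]
  have : (univ.filter fun x : α => x ≠ a) = univ.erase a := by ext x; simp
  rw [this, card_erase_of_mem (by simp)]
  simp [Finset.card_univ]

end Helpers
section B
universe u v

lemma card_invariant_le (β : Type v) [Fintype β] [DecidableEq β] :
    ∀ (n : ℕ) (α : Type u) [Fintype α] [DecidableEq α] (p : α → α),
    Fintype.card α = 2 * n → Function.Involutive p → (∀ x, p x ≠ x) →
    Fintype.card {f : α → β // f ∘ p = f} ≤ Fintype.card β ^ n := by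
  intro n
  induction n with
  | zero =>
    intro α _ _ p hcard _ _
    have : IsEmpty α := Fintype.card_eq_zero_iff.mp (by omega)
    have hsub : Subsingleton {f : α → β // f ∘ p = f} := by
      constructor; intro f g
      apply Subtype.ext; funext x; exact (this.false x).elim
    calc Fintype.card {f : α → β // f ∘ p = f} ≤ 1 := Fintype.card_le_one_iff_subsingleton.mpr hsub
    _ = Fintype.card β ^ 0 := by simp
  | succ n ih =>
    intro α _ _ p hcard hinv hfpf
    have hne : Nonempty α := Fintype.card_pos_iff.mp (by omega)
    obtain ⟨a⟩ := hne
    obtain ⟨B, hB⟩ : ∃ B, p a = B := ⟨p a, rfl⟩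
    have hBa : B ≠ a := hB ▸ hfpf a
    let α' := {x : α // x ≠ a ∧ x ≠ B}
    have hpmem : ∀ x : α', p x.val ≠ a ∧ p x.val ≠ B := by
      rintro ⟨x, hxa, hxB⟩
      constructor
      · intro h; apply hxB; have := congrArg p h; rw [hinv x, hB] at this; exact this
      · intro h; apply hxa
        have h2 : p x = p a := h.trans hB.symm
        exact (hinv x).symm.trans ((congrArg p h2).trans (hinv a))
    let p' : α' → α' := fun x => ⟨p x.val, hpmem x⟩
    have hp'inv : Function.Involutive p' := by
      intro x; apply Subtype.ext; exact hinv x.val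
    have hp'fpf : ∀ x, p' x ≠ x := by
      intro x h; exact hfpf x.val (congrArg Subtype.val h)
    have hcard' : Fintype.card α' = 2 * n := by
      rw [card_ne_pair a B (Ne.symm hBa), hcard]; omega
    let Φ : {f : α → β // f ∘ p = f} → β × {f : α' → β // f ∘ p' = f} :=
      fun f => ⟨f.val a, ⟨fun x => f.val x.val, by
        funext x; exact congrFun f.2 x.val⟩⟩
    have hΦ : Function.Injective Φ := by
      rintro ⟨f, hf⟩ ⟨g, hg⟩ h
      simp only [Φ, Prod.mk.injEq, Subtype.mk.injEq] at h
      apply Subtype.ext; funext x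
      show f x = g x
      by_cases hxa : x = a
      · subst hxa; exact h.1
      by_cases hxB : x = B
      · have hfB : f x = f a := by rw [hxB, ← hB]; exact congrFun hf a
        have hgB : g x = g a := by rw [hxB, ← hB]; exact congrFun hg a
        rw [hfB, hgB]; exact h.1
      · exact congrFun h.2 (⟨x, hxa, hxB⟩ : α')
    calc Fintype.card {f : α → β // f ∘ p = f}
        ≤ Fintype.card (β × {f : α' → β // f ∘ p' = f}) := Fintype.card_le_of_injective Φ hΦ
      _ = Fintype.card β * Fintype.card {f : α' → β // f ∘ p' = f} := Fintype.card_prod _ _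
      _ ≤ Fintype.card β * Fintype.card β ^ n :=
          Nat.mul_le_mul_left _ (ih α' p' hcard' hp'inv hp'fpf)
      _ = Fintype.card β ^ (n + 1) := by ring

end B
section A
universe u v

lemma exists_pairing {β : Type v} [DecidableEq β] :
    ∀ (n : ℕ) (α : Type u) [Fintype α] [DecidableEq α] (c : α → β),
    Fintype.card α = n →
    (∀ x, Even ((univ.filter fun y => c y = c x).card)) →
    ∃ p : α → α, Function.Involutive p ∧ (∀ x, p x ≠ x) ∧ (∀ x, c (p x) = c x) := by
  intro n
  induction n using Nat.strong_induction_on with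
  | _ n ih =>
    intro α _ _ c hcard heven
    rcases isEmpty_or_nonempty α with hemp | ⟨⟨a⟩⟩
    · exact ⟨id, fun x => rfl, fun x => (hemp.false x).elim, fun x => rfl⟩
    · have hamem : a ∈ univ.filter fun y => c y = c a := by simp
      have hcard1 : 1 < (univ.filter fun y => c y = c a).card := by
        rcases heven a with ⟨k, hk⟩
        have h1 : 0 < (univ.filter fun y => c y = c a).card := Finset.card_pos.mpr ⟨a, hamem⟩
        omega
      obtain ⟨b, hbmem, hba⟩ := Finset.exists_mem_ne hcard1 a
      have hcb : c b = c a := (Finset.mem_filter.mp hbmem).2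
      have hn2 : 2 ≤ n := by
        rw [← hcard]; exact Fintype.one_lt_card_iff.mpr ⟨b, a, hba⟩
      set α' := {x : α // x ≠ a ∧ x ≠ b} with hα'
      have hcard' : Fintype.card α' = n - 2 := by
        rw [card_ne_pair a b (Ne.symm hba), hcard]
      -- fiber counting in α'
      have hfib : ∀ x : α',
          ((univ.filter fun y : α' => c y.val = c x.val).card =
            (((univ.filter fun y : α => c y = c x.val).erase a).erase b).card) := by
        intro x
        apply Finset.card_bij (fun (y : α') _ => y.val)
        · rintro ⟨y, hya, hyb⟩ hy
          simp only [Finset.mem_filter, Finset.mem_univ, true_and] at hy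
          simp [Finset.mem_erase, hya, hyb, hy]
        · rintro ⟨y, _⟩ _ ⟨z, _⟩ _ h; exact Subtype.ext h
        · intro z hz
          simp only [Finset.mem_erase, Finset.mem_filter, Finset.mem_univ, true_and] at hz
          exact ⟨⟨z, hz.2.1, hz.1⟩, by simp [hz.2.2], rfl⟩
      have heven' : ∀ x : α', Even ((univ.filter fun y : α' => c y.val = c x.val).card) := by
        intro x
        rw [hfib x]
        by_cases hx : c x.val = c a
        · have hamem' : a ∈ univ.filter fun y : α => c y = c x.val := by simp [hx]
          have hbmem' : b ∈ (univ.filter fun y : α => c y = c x.val).erase a := by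
            simp [Finset.mem_erase, hba, hcb, hx]
          rw [Finset.card_erase_of_mem hbmem', Finset.card_erase_of_mem hamem']
          rcases heven x.val with ⟨k, hk⟩
          have hge : 2 ≤ (univ.filter fun y : α => c y = c x.val).card := by
            apply Finset.one_lt_card.mpr
            exact ⟨a, hamem', b, Finset.mem_of_mem_erase hbmem', Ne.symm hba⟩
          exact ⟨k - 1, by omega⟩
        · have hanot : a ∉ univ.filter fun y : α => c y = c x.val := by
            simp only [Finset.mem_filter, Finset.mem_univ, true_and]
            exact fun h => hx h.symm
          have hbnot : b ∉ (univ.filter fun y : α => c y = c x.val).erase a := by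
            simp only [Finset.mem_erase, Finset.mem_filter, Finset.mem_univ, true_and]
            rintro ⟨-, h⟩; exact hx (by rw [← hcb, h])
          rw [Finset.erase_eq_of_notMem hbnot, Finset.erase_eq_of_notMem hanot]
          exact heven x.val
      obtain ⟨p', hp'inv, hp'fpf, hp'c⟩ :=
        ih (n - 2) (by omega) α' (fun y => c y.val) hcard' heven'
      set p : α → α := fun x => if h : x = a then b else if h2 : x = b then a
          else (p' ⟨x, h, h2⟩).val with hp
      have hpa : p a = b := by simp [hp]
      have hpb : p b = a := by simp [hp, hba]
      have hpo : ∀ (x) (h : x ≠ a) (h2 : x ≠ b), p x = (p' ⟨x, h, h2⟩).val := by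
        intro x h h2; simp [hp, h, h2]
      refine ⟨p, ?_, ?_, ?_⟩
      · intro x
        by_cases h : x = a
        · rw [h, hpa, hpb]
        · by_cases h2 : x = b
          · rw [h2, hpb, hpa]
          · rw [hpo x h h2]
            have hmem := (p' ⟨x, h, h2⟩).2
            rw [hpo _ hmem.1 hmem.2]
            have heta : (⟨(p' ⟨x, h, h2⟩).val, hmem.1, hmem.2⟩ : α') = p' ⟨x, h, h2⟩ :=
              Subtype.ext rfl
            rw [heta]
            exact congrArg Subtype.val (hp'inv ⟨x, h, h2⟩)
      · intro x
        by_cases h : x = a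
        · rw [h, hpa]; exact hba
        · by_cases h2 : x = b
          · rw [h2, hpb]; exact Ne.symm hba
          · rw [hpo x h h2]
            intro heq
            exact hp'fpf ⟨x, h, h2⟩ (Subtype.ext heq)
      · intro x
        by_cases h : x = a
        · rw [h, hpa]; exact hcb
        · by_cases h2 : x = b
          · rw [h2, hpb]; exact hcb.symm
          · rw [hpo x h h2]
            exact hp'c ⟨x, h, h2⟩

end A
section D
universe u

lemma card_fpf_le :
    ∀ (n : ℕ) (α : Type u) [Fintype α] [DecidableEq α],
    Fintype.card α = 2 * n →
    Fintype.card {p : α → α // Function.Involutive p ∧ ∀ x, p x ≠ x} ≤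
      ∏ k ∈ Finset.range n, (2 * k + 1) := by
  intro n
  induction n with
  | zero =>
    intro α _ _ hcard
    have hemp : IsEmpty α := Fintype.card_eq_zero_iff.mp (by omega)
    have hsub : Subsingleton {p : α → α // Function.Involutive p ∧ ∀ x, p x ≠ x} := by
      constructor; intro f g; apply Subtype.ext; funext x; exact (hemp.false x).elim
    simpa using Fintype.card_le_one_iff_subsingleton.mpr hsub
  | succ n ih =>
    intro α _ _ hcard
    obtain ⟨a⟩ : Nonempty α := Fintype.card_pos_iff.mp (by omega)
    let α₁ : {v : α // v ≠ a} → Type u := fun v => {x : α // x ≠ a ∧ x ≠ v.val}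
    let T := Σ v : {v : α // v ≠ a},
      {p' : α₁ v → α₁ v // Function.Involutive p' ∧ ∀ x, p' x ≠ x}
    have hrmem : ∀ (p : α → α), Function.Involutive p →
        ∀ (v : {v : α // v ≠ a}), p a = v.val →
        ∀ x : α₁ v, p x.val ≠ a ∧ p x.val ≠ v.val := by
      rintro p hpinv v hv ⟨x, hxa, hxv⟩
      constructor
      · intro h; apply hxv
        have := congrArg p h; rw [hpinv x, hv] at this; exact this
      · intro h; apply hxa
        have h2 : p x = p a := h.trans hv.symm
        exact (hpinv x).symm.trans ((congrArg p h2).trans (hpinv a))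
    let Φ : {p : α → α // Function.Involutive p ∧ ∀ x, p x ≠ x} → T :=
      fun p => ⟨⟨p.val a, p.2.2 a⟩,
        ⟨fun x => ⟨p.val x.val, hrmem p.val p.2.1 ⟨p.val a, p.2.2 a⟩ rfl x⟩,
          fun x => Subtype.ext (p.2.1 x.val),
          fun x h => p.2.2 x.val (congrArg Subtype.val h)⟩⟩
    let R : T → (α → α) := fun t => fun x =>
      if h : x = a then t.1.val
      else if h2 : x = t.1.val then a
      else (t.2.val ⟨x, h, h2⟩).val
    have hRΦ : ∀ p, R (Φ p) = p.val := by
      rintro ⟨p, hpinv, hpfpf⟩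
      funext x
      by_cases h : x = a
      · subst h; simp [R, Φ]
      · by_cases h2 : x = p a
        · simp only [R, Φ, dif_neg h, dif_pos h2]
          rw [h2, hpinv a]
        · simp [R, Φ, dif_neg h, dif_neg h2]
    have hΦ : Function.Injective Φ := by
      intro u w h
      apply Subtype.ext
      rw [← hRΦ u, ← hRΦ w, h]
    have hcardT : Fintype.card T =
        ∑ v : {v : α // v ≠ a}, Fintype.card
          {p' : α₁ v → α₁ v // Function.Involutive p' ∧ ∀ x, p' x ≠ x} :=
      Fintype.card_sigma
    calc Fintype.card {p : α → α // Function.Involutive p ∧ ∀ x, p x ≠ x}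
        ≤ Fintype.card T := Fintype.card_le_of_injective Φ hΦ
      _ = ∑ v : {v : α // v ≠ a}, Fintype.card
            {p' : α₁ v → α₁ v // Function.Involutive p' ∧ ∀ x, p' x ≠ x} := hcardT
      _ ≤ ∑ _v : {v : α // v ≠ a}, ∏ k ∈ Finset.range n, (2 * k + 1) := by
          apply Finset.sum_le_sum
          intro v _
          apply ih
          rw [card_ne_pair a v.val (Ne.symm v.2), hcard]
          clear * -; omega
      _ = (2 * n + 1) * ∏ k ∈ Finset.range n, (2 * k + 1) := by
          rw [Finset.sum_const, smul_eq_mul, Finset.card_univ, card_ne_single a, hcard]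
          have h21 : 2 * (n + 1) - 1 = 2 * n + 1 := by clear * -; omega
          rw [h21]
      _ = ∏ k ∈ Finset.range (n + 1), (2 * k + 1) := by
          rw [Finset.prod_range_succ, Nat.mul_comm]
end D
section Splice
universe u v
variable {α : Type u} [DecidableEq α]

/-- Restriction of an involution σ with σ a = b to the complement of {a,b}. -/
def rsub (σ : α → α) (a b : α) (hσ : Function.Involutive σ) (hab : σ a = b) :
    {x : α // x ≠ a ∧ x ≠ b} → {x : α // x ≠ a ∧ x ≠ b} :=
  fun x => ⟨σ x.val,
    fun hc => x.2.2 ((hσ x.val).symm.trans ((congrArg σ hc).trans hab)),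
    fun hc => x.2.1 ((hσ x.val).symm.trans ((congrArg σ hc).trans
      (show σ b = a by rw [← hab]; exact hσ a)))⟩

lemma rsub_val (σ : α → α) (a b : α) (hσ : Function.Involutive σ) (hab : σ a = b)
    (x : {x : α // x ≠ a ∧ x ≠ b}) : (rsub σ a b hσ hab x).val = σ x.val := rfl

lemma rsub_invol (σ : α → α) (a b : α) (hσ : Function.Involutive σ) (hab : σ a = b) :
    Function.Involutive (rsub σ a b hσ hab) :=
  fun x => Subtype.ext (hσ x.val)

lemma rsub_fpf (σ : α → α) (a b : α) (hσ : Function.Involutive σ) (hab : σ a = b)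
    (hfpf : ∀ x, σ x ≠ x) : ∀ x, rsub σ a b hσ hab x ≠ x :=
  fun x h => hfpf x.val (congrArg Subtype.val h)

lemma m_rsub {γ : Type v} (σ : α → α) (a b : α) (hσ : Function.Involutive σ) (hab : σ a = b)
    (m : α → γ) (hm : m ∘ σ = m) :
    (fun x : {x : α // x ≠ a ∧ x ≠ b} => m x.val) ∘ rsub σ a b hσ hab =
      (fun x => m x.val) :=
  funext fun x => congrFun hm x.val

/-- Splice of an involution p after removing a and v (v not the partner of a):
the partners of a and v get matched together. -/
def ssub (p : α → α) (hp : Function.Involutive p) (hpf : ∀ x, p x ≠ x)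
    (a v : α) (hva : v ≠ a) (hvB : v ≠ p a) :
    {x : α // x ≠ a ∧ x ≠ v} → {x : α // x ≠ a ∧ x ≠ v} :=
  fun x =>
    if h : x.val = p a then
      ⟨p v, fun hc => hvB ((hp v).symm.trans (congrArg p hc)), hpf v⟩
    else if h2 : x.val = p v then
      ⟨p a, hpf a, Ne.symm hvB⟩
    else
      ⟨p x.val, fun hc => h ((hp x.val).symm.trans (congrArg p hc)),
        fun hc => h2 ((hp x.val).symm.trans (congrArg p hc))⟩

variable (p : α → α) (hp : Function.Involutive p) (hpf : ∀ x, p x ≠ x)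
  (a v : α) (hva : v ≠ a) (hvB : v ≠ p a)

lemma pv_ne_pa' (p : α → α) (hp : Function.Involutive p) (a v : α) (hva : v ≠ a) :
    p v ≠ p a :=
  fun hc => hva ((hp v).symm.trans ((congrArg p hc).trans (hp a)))

lemma ssub_val_pa (x : {x : α // x ≠ a ∧ x ≠ v}) (h : x.val = p a) :
    (ssub p hp hpf a v hva hvB x).val = p v := by
  simp only [ssub, dif_pos h]

lemma ssub_val_pv (x : {x : α // x ≠ a ∧ x ≠ v}) (h : x.val ≠ p a) (h2 : x.val = p v) :
    (ssub p hp hpf a v hva hvB x).val = p a := by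
  simp only [ssub, dif_neg h, dif_pos h2]

lemma ssub_val_other (x : {x : α // x ≠ a ∧ x ≠ v}) (h : x.val ≠ p a) (h2 : x.val ≠ p v) :
    (ssub p hp hpf a v hva hvB x).val = p x.val := by
  simp only [ssub, dif_neg h, dif_neg h2]

lemma ssub_invol : Function.Involutive (ssub p hp hpf a v hva hvB) := by
  intro x
  apply Subtype.ext
  by_cases h : x.val = p a
  · have e1 : (ssub p hp hpf a v hva hvB x).val = p v := ssub_val_pa p hp hpf a v hva hvB x h
    rw [ssub_val_pv p hp hpf a v hva hvB _ (by rw [e1]; exact pv_ne_pa' p hp a v hva) (by rw [e1])]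
    exact h.symm
  · by_cases h2 : x.val = p v
    · have e1 : (ssub p hp hpf a v hva hvB x).val = p a :=
        ssub_val_pv p hp hpf a v hva hvB x h h2
      rw [ssub_val_pa p hp hpf a v hva hvB _ (by rw [e1])]
      exact h2.symm
    · have e1 : (ssub p hp hpf a v hva hvB x).val = p x.val :=
        ssub_val_other p hp hpf a v hva hvB x h h2
      have hpxa : p x.val ≠ p a := fun hc => x.2.1 ((hp x.val).symm.trans ((congrArg p hc).trans (hp a)))
      have hpxv : p x.val ≠ p v := fun hc => x.2.2 ((hp x.val).symm.trans ((congrArg p hc).trans (hp v)))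
      rw [ssub_val_other p hp hpf a v hva hvB _ (by rw [e1]; exact hpxa) (by rw [e1]; exact hpxv), e1]
      exact hp x.val

lemma ssub_fpf : ∀ x, ssub p hp hpf a v hva hvB x ≠ x := by
  intro x hc
  have hval := congrArg Subtype.val hc
  by_cases h : x.val = p a
  · rw [ssub_val_pa p hp hpf a v hva hvB x h, h] at hval
    exact pv_ne_pa' p hp a v hva hval
  · by_cases h2 : x.val = p v
    · rw [ssub_val_pv p hp hpf a v hva hvB x h h2, h2] at hval
      exact pv_ne_pa' p hp a v hva hval.symm
    · rw [ssub_val_other p hp hpf a v hva hvB x h h2] at hval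
      exact hpf x.val hval

lemma m_ssub {γ : Type v} (m : α → γ) (hm1 : m ∘ p = m) (hmv : m v = m a) :
    (fun x : {x : α // x ≠ a ∧ x ≠ v} => m x.val) ∘ ssub p hp hpf a v hva hvB =
      (fun x => m x.val) := by
  funext x
  show m (ssub p hp hpf a v hva hvB x).val = m x.val
  by_cases h : x.val = p a
  · rw [ssub_val_pa p hp hpf a v hva hvB x h, h]
    calc m (p v) = m v := congrFun hm1 v
      _ = m a := hmv
      _ = m (p a) := (congrFun hm1 a).symm
  · by_cases h2 : x.val = p v
    · rw [ssub_val_pv p hp hpf a v hva hvB x h h2, h2]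
      calc m (p a) = m a := congrFun hm1 a
        _ = m v := hmv.symm
        _ = m (p v) := (congrFun hm1 v).symm
    · rw [ssub_val_other p hp hpf a v hva hvB x h h2]
      exact congrFun hm1 x.val

end Splice
section Main
universe u

lemma sigma_sub_ext {X : Type*} {Y : Type*} {P : X → Prop} {Q : {x : X // P x} → Y → Prop}
    {t t' : Σ x : {x : X // P x}, {y : Y // Q x y}}
    (h1 : t.1.val = t'.1.val) (h2 : t.2.val = t'.2.val) : t = t' := by
  rcases t with ⟨⟨x, hx⟩, ⟨y, hy⟩⟩
  rcases t' with ⟨⟨x', hx'⟩, ⟨y', hy'⟩⟩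
  dsimp at h1 h2
  subst h1; subst h2
  rfl

set_option maxHeartbeats 2000000 in
lemma card_pairings_le (M : ℕ) :
    ∀ (n : ℕ) (α : Type u) [Fintype α] [DecidableEq α] (p : α → α),
    Fintype.card α = 2 * n → Function.Involutive p → (∀ x, p x ≠ x) →
    Fintype.card (Σ σ : {σ : α → α // Function.Involutive σ ∧ ∀ x, σ x ≠ x},
      {m : α → Fin M // m ∘ p = m ∧ m ∘ σ.val = m}) ≤
      ∏ k ∈ Finset.range n, (M + 2 * k) := by
  intro n
  induction n with
  | zero =>
    intro α _ _ p hcard hinv hfpf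
    have hemp : IsEmpty α := Fintype.card_eq_zero_iff.mp (by omega)
    have hsub : Subsingleton (Σ σ : {σ : α → α // Function.Involutive σ ∧ ∀ x, σ x ≠ x},
        {m : α → Fin M // m ∘ p = m ∧ m ∘ σ.val = m}) := by
      constructor
      intro t t'
      apply sigma_sub_ext
      · funext x; exact (hemp.false x).elim
      · funext x; exact (hemp.false x).elim
    simpa using Fintype.card_le_one_iff_subsingleton.mpr hsub
  | succ n ih =>
    intro α _ _ p hcard hinv hfpf
    obtain ⟨a⟩ : Nonempty α := Fintype.card_pos_iff.mp (by omega)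
    obtain ⟨B, hB⟩ : ∃ B, p a = B := ⟨p a, rfl⟩
    have hBa : B ≠ a := hB ▸ hfpf a
    let p₀ : {v : α // v ≠ a ∧ v ≠ B} → {v : α // v ≠ a ∧ v ≠ B} := rsub p a B hinv hB
    let pv : ∀ v : {v : α // v ≠ a ∧ v ≠ B},
        {x : α // x ≠ a ∧ x ≠ v.val} → {x : α // x ≠ a ∧ x ≠ v.val} := fun v =>
      ssub p hinv hfpf a v.val v.2.1 (fun hc => v.2.2 (hc.trans hB))
    haveI instFib : ∀ v : {v : α // v ≠ a ∧ v ≠ B}, Fintype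
        (Σ σ : {σ : {x : α // x ≠ a ∧ x ≠ v.val} → {x : α // x ≠ a ∧ x ≠ v.val} //
          Function.Involutive σ ∧ ∀ x, σ x ≠ x},
        {m : {x : α // x ≠ a ∧ x ≠ v.val} → Fin M // m ∘ pv v = m ∧ m ∘ σ.val = m}) :=
      fun v => by infer_instance
    let Φ : (Σ σ : {σ : α → α // Function.Involutive σ ∧ ∀ x, σ x ≠ x},
        {m : α → Fin M // m ∘ p = m ∧ m ∘ σ.val = m}) →
        ((Fin M × (Σ σ : {σ : {v : α // v ≠ a ∧ v ≠ B} → {v : α // v ≠ a ∧ v ≠ B} //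
            Function.Involutive σ ∧ ∀ x, σ x ≠ x},
          {m : {v : α // v ≠ a ∧ v ≠ B} → Fin M // m ∘ p₀ = m ∧ m ∘ σ.val = m})) ⊕
         (Σ v : {v : α // v ≠ a ∧ v ≠ B},
          Σ σ : {σ : {x : α // x ≠ a ∧ x ≠ v.val} → {x : α // x ≠ a ∧ x ≠ v.val} //
            Function.Involutive σ ∧ ∀ x, σ x ≠ x},
          {m : {x : α // x ≠ a ∧ x ≠ v.val} → Fin M // m ∘ pv v = m ∧ m ∘ σ.val = m})) := fun t =>
      if h : t.1.val a = B then
        Sum.inl (t.2.val a,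
          ⟨⟨rsub t.1.val a B t.1.2.1 h, rsub_invol t.1.val a B t.1.2.1 h,
             rsub_fpf t.1.val a B t.1.2.1 h t.1.2.2⟩,
           ⟨fun x => t.2.val x.val,
            m_rsub p a B hinv hB t.2.val t.2.2.1,
            m_rsub t.1.val a B t.1.2.1 h t.2.val t.2.2.2⟩⟩)
      else
        Sum.inr ⟨⟨t.1.val a, t.1.2.2 a, h⟩,
          ⟨⟨rsub t.1.val a (t.1.val a) t.1.2.1 rfl,
             rsub_invol t.1.val a (t.1.val a) t.1.2.1 rfl,
             rsub_fpf t.1.val a (t.1.val a) t.1.2.1 rfl t.1.2.2⟩,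
           ⟨fun x => t.2.val x.val,
            m_ssub p hinv hfpf a (t.1.val a) (t.1.2.2 a) (fun hc => h (hc.trans hB))
              t.2.val t.2.2.1 (congrFun t.2.2.2 a),
            m_rsub t.1.val a (t.1.val a) t.1.2.1 rfl t.2.val t.2.2.2⟩⟩⟩
    let R : ((Fin M × (Σ σ : {σ : {v : α // v ≠ a ∧ v ≠ B} → {v : α // v ≠ a ∧ v ≠ B} //
            Function.Involutive σ ∧ ∀ x, σ x ≠ x},
          {m : {v : α // v ≠ a ∧ v ≠ B} → Fin M // m ∘ p₀ = m ∧ m ∘ σ.val = m})) ⊕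
         (Σ v : {v : α // v ≠ a ∧ v ≠ B},
          Σ σ : {σ : {x : α // x ≠ a ∧ x ≠ v.val} → {x : α // x ≠ a ∧ x ≠ v.val} //
            Function.Involutive σ ∧ ∀ x, σ x ≠ x},
          {m : {x : α // x ≠ a ∧ x ≠ v.val} → Fin M // m ∘ pv v = m ∧ m ∘ σ.val = m})) →
        (α → α) × (α → Fin M) := fun t =>
      match t with
      | Sum.inl cs =>
        (fun x => if h : x = a then B else if h2 : x = B then a
            else (cs.2.1.val ⟨x, h, h2⟩).val,
         fun x => if h : x = a then cs.1 else if h2 : x = B then cs.1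
            else cs.2.2.val ⟨x, h, h2⟩)
      | Sum.inr vs =>
        (fun x => if h : x = a then vs.1.val else if h2 : x = vs.1.val then a
            else (vs.2.1.val ⟨x, h, h2⟩).val,
         fun x => if h : x = a then vs.2.2.val ⟨B, hBa, Ne.symm vs.1.2.2⟩
            else if h2 : x = vs.1.val then vs.2.2.val ⟨B, hBa, Ne.symm vs.1.2.2⟩
            else vs.2.2.val ⟨x, h, h2⟩)
    have hRΦ : ∀ t, R (Φ t) = (t.1.val, t.2.val) := by
      rintro ⟨⟨σ, hσi, hσf⟩, ⟨m, hm1, hm2⟩⟩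
      have hmB : m B = m a := by
        have h0 : m (p a) = m a := congrFun hm1 a
        rwa [hB] at h0
      by_cases h : σ a = B
      · simp only [Φ, R, dif_pos h]
        refine Prod.ext ?_ ?_ <;> dsimp only <;> funext x
        · by_cases hxa : x = a
          · rw [dif_pos hxa, hxa]; exact h.symm
          · by_cases hxB : x = B
            · rw [dif_neg hxa, dif_pos hxB, hxB, ← h]
              exact (hσi a).symm
            · rw [dif_neg hxa, dif_neg hxB]; rfl
        · by_cases hxa : x = a
          · rw [dif_pos hxa, hxa]
          · by_cases hxB : x = B
            · rw [dif_neg hxa, dif_pos hxB, hxB]; exact hmB.symm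
            · rw [dif_neg hxa, dif_neg hxB]
      · simp only [Φ, R, dif_neg h]
        refine Prod.ext ?_ ?_ <;> dsimp only <;> funext x
        · by_cases hxa : x = a
          · rw [dif_pos hxa, hxa]
          · by_cases hxv : x = σ a
            · rw [dif_neg hxa, dif_pos hxv, hxv]
              exact (hσi a).symm
            · rw [dif_neg hxa, dif_neg hxv]; rfl
        · by_cases hxa : x = a
          · rw [dif_pos hxa, hxa]; exact hmB
          · by_cases hxv : x = σ a
            · rw [dif_neg hxa, dif_pos hxv, hxv]
              exact hmB.trans (congrFun hm2 a).symm
            · rw [dif_neg hxa, dif_neg hxv]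
    have hΦinj : Function.Injective Φ := by
      intro t t' hh
      have hR : (t.1.val, t.2.val) = (t'.1.val, t'.2.val) := by
        rw [← hRΦ t, ← hRΦ t', hh]
      exact sigma_sub_ext (congrArg Prod.fst hR) (congrArg Prod.snd hR)
    have hcardV : Fintype.card {v : α // v ≠ a ∧ v ≠ B} = 2 * n := by
      have h2 := card_ne_pair a B (Ne.symm hBa)
      rw [hcard] at h2
      rw [h2]; clear * -; omega
    have hcardαv : ∀ v : {v : α // v ≠ a ∧ v ≠ B},
        Fintype.card {x : α // x ≠ a ∧ x ≠ v.val} = 2 * n := by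
      intro v
      have h2 := card_ne_pair a v.val (Ne.symm v.2.1)
      rw [hcard] at h2
      rw [h2]; clear * -; omega
    have hS0 : Fintype.card (Σ σ : {σ : {v : α // v ≠ a ∧ v ≠ B} → {v : α // v ≠ a ∧ v ≠ B} //
            Function.Involutive σ ∧ ∀ x, σ x ≠ x},
          {m : {v : α // v ≠ a ∧ v ≠ B} → Fin M // m ∘ p₀ = m ∧ m ∘ σ.val = m}) ≤
        ∏ k ∈ Finset.range n, (M + 2 * k) :=
      ih _ p₀ hcardV (rsub_invol p a B hinv hB) (rsub_fpf p a B hinv hB hfpf)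
    have hS1 : ∀ v : {v : α // v ≠ a ∧ v ≠ B},
        Fintype.card (Σ σ : {σ : {x : α // x ≠ a ∧ x ≠ v.val} → {x : α // x ≠ a ∧ x ≠ v.val} //
            Function.Involutive σ ∧ ∀ x, σ x ≠ x},
          {m : {x : α // x ≠ a ∧ x ≠ v.val} → Fin M // m ∘ pv v = m ∧ m ∘ σ.val = m}) ≤
        ∏ k ∈ Finset.range n, (M + 2 * k) := by
      intro v
      have h := ih _ (pv v) (hcardαv v)
        (ssub_invol p hinv hfpf a v.val v.2.1 (fun hc => v.2.2 (hc.trans hB)))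
        (ssub_fpf p hinv hfpf a v.val v.2.1 (fun hc => v.2.2 (hc.trans hB)))
      convert h using 2
    calc Fintype.card (Σ σ : {σ : α → α // Function.Involutive σ ∧ ∀ x, σ x ≠ x},
        {m : α → Fin M // m ∘ p = m ∧ m ∘ σ.val = m})
        ≤ Fintype.card ((Fin M × (Σ σ : {σ : {v : α // v ≠ a ∧ v ≠ B} → {v : α // v ≠ a ∧ v ≠ B} //
            Function.Involutive σ ∧ ∀ x, σ x ≠ x},
          {m : {v : α // v ≠ a ∧ v ≠ B} → Fin M // m ∘ p₀ = m ∧ m ∘ σ.val = m})) ⊕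
         (Σ v : {v : α // v ≠ a ∧ v ≠ B},
          Σ σ : {σ : {x : α // x ≠ a ∧ x ≠ v.val} → {x : α // x ≠ a ∧ x ≠ v.val} //
            Function.Involutive σ ∧ ∀ x, σ x ≠ x},
          {m : {x : α // x ≠ a ∧ x ≠ v.val} → Fin M // m ∘ pv v = m ∧ m ∘ σ.val = m})) :=
          Fintype.card_le_of_injective Φ hΦinj
      _ = M * Fintype.card (Σ σ : {σ : {v : α // v ≠ a ∧ v ≠ B} → {v : α // v ≠ a ∧ v ≠ B} //
            Function.Involutive σ ∧ ∀ x, σ x ≠ x},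
          {m : {v : α // v ≠ a ∧ v ≠ B} → Fin M // m ∘ p₀ = m ∧ m ∘ σ.val = m}) +
          ∑ v : {v : α // v ≠ a ∧ v ≠ B},
            Fintype.card (Σ σ : {σ : {x : α // x ≠ a ∧ x ≠ v.val} → {x : α // x ≠ a ∧ x ≠ v.val} //
              Function.Involutive σ ∧ ∀ x, σ x ≠ x},
            {m : {x : α // x ≠ a ∧ x ≠ v.val} → Fin M // m ∘ pv v = m ∧ m ∘ σ.val = m}) := by
          rw [Fintype.card_sum, Fintype.card_prod, Fintype.card_fin]
          congr 1
          exact Fintype.card_sigma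
      _ ≤ M * (∏ k ∈ Finset.range n, (M + 2 * k)) +
            ∑ _v : {v : α // v ≠ a ∧ v ≠ B}, ∏ k ∈ Finset.range n, (M + 2 * k) := by
          gcongr with v hv <;> first | exact hS0 | exact hS1 v
      _ = (M + 2 * n) * ∏ k ∈ Finset.range n, (M + 2 * k) := by
          rw [Finset.sum_const, smul_eq_mul, Finset.card_univ, hcardV]
          ring
      _ = ∏ k ∈ Finset.range (n + 1), (M + 2 * k) := by
          rw [Finset.prod_range_succ, Nat.mul_comm]
end Main
universe uu

set_option maxHeartbeats 2000000 in
lemma surviving_aux {I J : Type*} [Fintype I] [Fintype J]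
    [DecidableEq I] [DecidableEq J]
    (M n : ℕ) (α : Type uu) [Fintype α] [DecidableEq α]
    (hcardFin : Fintype.card α = 2 * n) :
    Nat.card {s : α → I × J × Fin M //
      (∀ v, Even ((Finset.univ.filter fun v' =>
        ((s v').1, (s v').2.2) = ((s v).1, (s v).2.2)).card)) ∧
      (∀ v, Even ((Finset.univ.filter fun v' =>
        ((s v').2.1, (s v').2.2) = ((s v).2.1, (s v).2.2)).card))} ≤
    Fintype.card I ^ n * Fintype.card J ^ n *
      ((∏ k ∈ Finset.range n, (2 * k + 1)) * ∏ k ∈ Finset.range n, (M + 2 * k)) := by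

  have hex : ∀ s : {s : α → I × J × Fin M //
      (∀ v, Even ((Finset.univ.filter fun v' =>
        ((s v').1, (s v').2.2) = ((s v).1, (s v).2.2)).card)) ∧
      (∀ v, Even ((Finset.univ.filter fun v' =>
        ((s v').2.1, (s v').2.2) = ((s v).2.1, (s v).2.2)).card))},
      ∃ pq : (α → α) × (α → α),
        (Function.Involutive pq.1 ∧ (∀ x, pq.1 x ≠ x) ∧
          ∀ v, ((s.val (pq.1 v)).1, (s.val (pq.1 v)).2.2) = ((s.val v).1, (s.val v).2.2)) ∧
        (Function.Involutive pq.2 ∧ (∀ x, pq.2 x ≠ x) ∧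
          ∀ v, ((s.val (pq.2 v)).2.1, (s.val (pq.2 v)).2.2) = ((s.val v).2.1, (s.val v).2.2)) := by
    intro s
    obtain ⟨p, hp1, hp2, hp3⟩ := exists_pairing (2 * n) (α)
      (fun v => ((s.val v).1, (s.val v).2.2)) hcardFin s.2.1
    obtain ⟨q, hq1, hq2, hq3⟩ := exists_pairing (2 * n) (α)
      (fun v => ((s.val v).2.1, (s.val v).2.2)) hcardFin s.2.2
    exact ⟨(p, q), ⟨hp1, hp2, hp3⟩, ⟨hq1, hq2, hq3⟩⟩
  let Φ : {s : α → I × J × Fin M //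
      (∀ v, Even ((Finset.univ.filter fun v' =>
        ((s v').1, (s v').2.2) = ((s v).1, (s v).2.2)).card)) ∧
      (∀ v, Even ((Finset.univ.filter fun v' =>
        ((s v').2.1, (s v').2.2) = ((s v).2.1, (s v).2.2)).card))} →
      (Σ p : {p : α → α // Function.Involutive p ∧ ∀ x, p x ≠ x},
        ({f : α → I // f ∘ p.val = f} ×
         Σ σ : {σ : α → α // Function.Involutive σ ∧ ∀ x, σ x ≠ x},
          ({g : α → J // g ∘ σ.val = g} ×
           {m : α → Fin M // m ∘ p.val = m ∧ m ∘ σ.val = m}))) := fun s =>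
    ⟨⟨(Classical.choose (hex s)).1, (Classical.choose_spec (hex s)).1.1,
        (Classical.choose_spec (hex s)).1.2.1⟩,
     ⟨fun v => (s.val v).1, by
        show (fun v => (s.val v).1) ∘ (Classical.choose (hex s)).1 = fun v => (s.val v).1
        funext v
        have h2 := congrArg Prod.fst ((Classical.choose_spec (hex s)).1.2.2 v)
        exact h2⟩,
     ⟨(Classical.choose (hex s)).2, (Classical.choose_spec (hex s)).2.1,
        (Classical.choose_spec (hex s)).2.2.1⟩,
     ⟨fun v => (s.val v).2.1, by
        show (fun v => (s.val v).2.1) ∘ (Classical.choose (hex s)).2 = fun v => (s.val v).2.1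
        funext v
        have h2 := congrArg Prod.fst ((Classical.choose_spec (hex s)).2.2.2 v)
        exact h2⟩,
     ⟨fun v => (s.val v).2.2,
      by
        show (fun v => (s.val v).2.2) ∘ (Classical.choose (hex s)).1 = fun v => (s.val v).2.2
        funext v
        have h2 := congrArg Prod.snd ((Classical.choose_spec (hex s)).1.2.2 v)
        exact h2,
      by
        show (fun v => (s.val v).2.2) ∘ (Classical.choose (hex s)).2 = fun v => (s.val v).2.2
        funext v
        have h2 := congrArg Prod.snd ((Classical.choose_spec (hex s)).2.2.2 v)
        exact h2⟩⟩
  let Rec : (Σ p : {p : α → α // Function.Involutive p ∧ ∀ x, p x ≠ x},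
        ({f : α → I // f ∘ p.val = f} ×
         Σ σ : {σ : α → α // Function.Involutive σ ∧ ∀ x, σ x ≠ x},
          ({g : α → J // g ∘ σ.val = g} ×
           {m : α → Fin M // m ∘ p.val = m ∧ m ∘ σ.val = m}))) →
      (α → I × J × Fin M) := fun t =>
    fun v => (t.2.1.val v, t.2.2.2.1.val v, t.2.2.2.2.val v)
  have hRec : ∀ s, Rec (Φ s) = s.val := fun s => rfl
  have hinj : Function.Injective Φ := by
    intro s t h
    apply Subtype.ext
    rw [← hRec s, ← hRec t, h]
  have hf : ∀ p : {p : α → α // Function.Involutive p ∧ ∀ x, p x ≠ x},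
      Fintype.card {f : α → I // f ∘ p.val = f} ≤ Fintype.card I ^ n :=
    fun p => card_invariant_le I n (α) p.val hcardFin p.2.1 p.2.2
  have hg : ∀ σ : {σ : α → α // Function.Involutive σ ∧ ∀ x, σ x ≠ x},
      Fintype.card {g : α → J // g ∘ σ.val = g} ≤ Fintype.card J ^ n :=
    fun σ => card_invariant_le J n (α) σ.val hcardFin σ.2.1 σ.2.2
  have hσpart : ∀ p : {p : α → α // Function.Involutive p ∧ ∀ x, p x ≠ x},
      Fintype.card (Σ σ : {σ : α → α //
          Function.Involutive σ ∧ ∀ x, σ x ≠ x},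
        ({g : α → J // g ∘ σ.val = g} ×
         {m : α → Fin M // m ∘ p.val = m ∧ m ∘ σ.val = m})) ≤
      Fintype.card J ^ n * ∏ k ∈ Finset.range n, (M + 2 * k) := by
    intro p
    have hm : Fintype.card (Σ σ : {σ : α → α //
          Function.Involutive σ ∧ ∀ x, σ x ≠ x},
        {m : α → Fin M // m ∘ p.val = m ∧ m ∘ σ.val = m}) ≤
        ∏ k ∈ Finset.range n, (M + 2 * k) :=
      card_pairings_le M n (α) p.val hcardFin p.2.1 p.2.2
    calc Fintype.card (Σ σ : {σ : α → α //
          Function.Involutive σ ∧ ∀ x, σ x ≠ x},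
        ({g : α → J // g ∘ σ.val = g} ×
         {m : α → Fin M // m ∘ p.val = m ∧ m ∘ σ.val = m}))
        = ∑ σ : {σ : α → α // Function.Involutive σ ∧ ∀ x, σ x ≠ x},
            Fintype.card {g : α → J // g ∘ σ.val = g} *
            Fintype.card {m : α → Fin M // m ∘ p.val = m ∧ m ∘ σ.val = m} := by
          rw [Fintype.card_sigma]
          exact Finset.sum_congr rfl fun σ _ => Fintype.card_prod _ _
      _ ≤ ∑ σ : {σ : α → α // Function.Involutive σ ∧ ∀ x, σ x ≠ x},
            Fintype.card J ^ n *
            Fintype.card {m : α → Fin M // m ∘ p.val = m ∧ m ∘ σ.val = m} :=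
          Finset.sum_le_sum fun σ _ => Nat.mul_le_mul_right _ (hg σ)
      _ = Fintype.card J ^ n * ∑ σ : {σ : α → α //
            Function.Involutive σ ∧ ∀ x, σ x ≠ x},
            Fintype.card {m : α → Fin M // m ∘ p.val = m ∧ m ∘ σ.val = m} := by
          rw [Finset.mul_sum]
      _ ≤ Fintype.card J ^ n * ∏ k ∈ Finset.range n, (M + 2 * k) := by
          apply Nat.mul_le_mul_left
          rw [← Fintype.card_sigma]
          exact hm
  calc Nat.card {s : α → I × J × Fin M //
      (∀ v, Even ((Finset.univ.filter fun v' =>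
        ((s v').1, (s v').2.2) = ((s v).1, (s v).2.2)).card)) ∧
      (∀ v, Even ((Finset.univ.filter fun v' =>
        ((s v').2.1, (s v').2.2) = ((s v).2.1, (s v).2.2)).card))}
      ≤ Nat.card (Σ p : {p : α → α //
            Function.Involutive p ∧ ∀ x, p x ≠ x},
        ({f : α → I // f ∘ p.val = f} ×
         Σ σ : {σ : α → α // Function.Involutive σ ∧ ∀ x, σ x ≠ x},
          ({g : α → J // g ∘ σ.val = g} ×
           {m : α → Fin M // m ∘ p.val = m ∧ m ∘ σ.val = m}))) :=
        Nat.card_le_card_of_injective Φ hinj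
    _ = Fintype.card (Σ p : {p : α → α //
            Function.Involutive p ∧ ∀ x, p x ≠ x},
        ({f : α → I // f ∘ p.val = f} ×
         Σ σ : {σ : α → α // Function.Involutive σ ∧ ∀ x, σ x ≠ x},
          ({g : α → J // g ∘ σ.val = g} ×
           {m : α → Fin M // m ∘ p.val = m ∧ m ∘ σ.val = m}))) :=
        Nat.card_eq_fintype_card
    _ = ∑ p : {p : α → α // Function.Involutive p ∧ ∀ x, p x ≠ x},
          Fintype.card {f : α → I // f ∘ p.val = f} *
          Fintype.card (Σ σ : {σ : α → α //
              Function.Involutive σ ∧ ∀ x, σ x ≠ x},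
            ({g : α → J // g ∘ σ.val = g} ×
             {m : α → Fin M // m ∘ p.val = m ∧ m ∘ σ.val = m})) := by
        rw [Fintype.card_sigma]
        exact Finset.sum_congr rfl fun p _ => Fintype.card_prod _ _
    _ ≤ ∑ _p : {p : α → α // Function.Involutive p ∧ ∀ x, p x ≠ x},
          Fintype.card I ^ n *
            (Fintype.card J ^ n * ∏ k ∈ Finset.range n, (M + 2 * k)) :=
        Finset.sum_le_sum fun p _ => Nat.mul_le_mul (hf p) (hσpart p)
    _ = Fintype.card {p : α → α // Function.Involutive p ∧ ∀ x, p x ≠ x} *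
          (Fintype.card I ^ n *
            (Fintype.card J ^ n * ∏ k ∈ Finset.range n, (M + 2 * k))) := by
        rw [Finset.sum_const, smul_eq_mul, Finset.card_univ]
    _ ≤ (∏ k ∈ Finset.range n, (2 * k + 1)) *
          (Fintype.card I ^ n *
            (Fintype.card J ^ n * ∏ k ∈ Finset.range n, (M + 2 * k))) :=
        Nat.mul_le_mul_right _ (card_fpf_le n (α) hcardFin)
    _ = Fintype.card I ^ n * Fintype.card J ^ n *
          ((∏ k ∈ Finset.range n, (2 * k + 1)) * ∏ k ∈ Finset.range n, (M + 2 * k)) := by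
        ring


/-- Bound on the number of "surviving" index tuples: if `S` is the set of `q`-tuples
(`q = 2n` even) of triples `(i_v, j_v, m_v) ∈ I × J × [M]` such that for every `v` both
`{v' : (i_{v'}, m_{v'}) = (i_v, m_v)}` and `{v' : (j_{v'}, m_{v'}) = (j_v, m_v)}` have even
cardinality, then `|S| ≤ |I|^{q/2} |J|^{q/2} (q-1)!! (M+q-2)!!/(M-2)!!`. -/
theorem surviving_tuples_bound {I J : Type*} [Fintype I] [Fintype J]
    [DecidableEq I] [DecidableEq J]
    (M n : ℕ) (hn : 0 < n) (hM : 0 < M) (hMeven : Even M) :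
    Nat.card {s : Fin (2 * n) → I × J × Fin M //
      (∀ v, Even ((Finset.univ.filter fun v' =>
        ((s v').1, (s v').2.2) = ((s v).1, (s v).2.2)).card)) ∧
      (∀ v, Even ((Finset.univ.filter fun v' =>
        ((s v').2.1, (s v').2.2) = ((s v).2.1, (s v).2.2)).card))} ≤
    Fintype.card I ^ n * Fintype.card J ^ n *
      ((∏ k ∈ Finset.range n, (2 * k + 1)) * ∏ k ∈ Finset.range n, (M + 2 * k)) :=
  surviving_aux M n (Fin (2 * n)) (Fintype.card_fin _)
end

section
/- Let {X_i}_{i=1}^n be drawn uniformly from a multiset 𝒳 ⊆ {±1}^n of size q, and suppose the sequence is ε-biased. For each x ∈ 𝒳, let g ∈ 𝔽₂^n be defined by x_i = (−1)^{g_i}. Then the n×q matrix G whose columns are these vectors g generates an n-dimensional linear code in 𝔽₂^q in which every nonzero codeword has weight between (1−ε)q/2 and (1+ε)q/2. -/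
open Finset

lemma zmod2_cases : ∀ a : ZMod 2, a = 0 ∨ a = 1 := by decide

lemma val2 : ZMod.val (0:ZMod 2) = 0 ∧ ZMod.val (1:ZMod 2) = 1 ∧ ZMod.val (2:ZMod 2) = 0 := by decide

lemma chi_add (a b : ZMod 2) :
    ((-1 : ℝ)) ^ (a + b).val = (-1 : ℝ) ^ a.val * (-1 : ℝ) ^ b.val := by
  rcases zmod2_cases a with h | h <;> rcases zmod2_cases b with h' | h' <;>
    subst h <;> subst h' <;> norm_num [val2.1, val2.2.1, val2.2.2]

lemma chi_sum {α : Type*} (s : Finset α) (f : α → ZMod 2) :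
    ((-1 : ℝ)) ^ (∑ i ∈ s, f i).val = ∏ i ∈ s, (-1 : ℝ) ^ (f i).val := by
  induction s using Finset.cons_induction with
  | empty => simp
  | cons a s ha ih => rw [Finset.sum_cons, Finset.prod_cons, chi_add, ih]

/-- If the columns of `G` (viewed over `𝔽₂`, corresponding to an `ε`-biased multiset
`𝒳 ⊆ {±1}ⁿ` of size `q` via `x_i = (-1)^{g_i}`, `ε < 1`) yield `ε`-biased random variables,
then `G` generates an `n`-dimensional linear code in `𝔽₂^q` (its rows are linearly
independent) in which every nonzero codeword has weight between `(1-ε)q/2` and `(1+ε)q/2`. -/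
theorem biased_gives_code (n q : ℕ) (hq : 0 < q) (ε : ℝ) (hε : ε < 1)
    (G : Matrix (Fin n) (Fin q) (ZMod 2))
    (hbias : ∀ I : Finset (Fin n), I.Nonempty →
      |(1 / (q : ℝ)) * ∑ j, ∏ i ∈ I, (-1 : ℝ) ^ (G i j).val| ≤ ε) :
    LinearIndependent (ZMod 2) (fun i => G i) ∧
    ∀ x : Fin n → ZMod 2, x ≠ 0 →
      (1 - ε) * q / 2 ≤ ((Finset.univ.filter fun j => Matrix.vecMul x G j = 1).card : ℝ) ∧
      ((Finset.univ.filter fun j => Matrix.vecMul x G j = 1).card : ℝ) ≤ (1 + ε) * q / 2 := by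
  have key : ∀ x : Fin n → ZMod 2, x ≠ 0 →
      (1 - ε) * q / 2 ≤ ((Finset.univ.filter fun j => Matrix.vecMul x G j = 1).card : ℝ) ∧
      ((Finset.univ.filter fun j => Matrix.vecMul x G j = 1).card : ℝ) ≤ (1 + ε) * q / 2 := by
    intro x hx
    set I : Finset (Fin n) := Finset.univ.filter (fun i => x i = 1) with hI
    have hIne : I.Nonempty := by
      rw [Finset.filter_nonempty_iff]
      by_contra h
      push_neg at h
      apply hx
      funext i
      rcases zmod2_cases (x i) with h' | h'
      · exact h'
      · exact absurd h' (h i (Finset.mem_univ i))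
    have hvec : ∀ j, Matrix.vecMul x G j = ∑ i ∈ I, G i j := by
      intro j
      rw [hI, Finset.sum_filter]
      simp only [Matrix.vecMul, dotProduct]
      apply Finset.sum_congr rfl
      intro i _
      rcases zmod2_cases (x i) with h | h <;> simp [h]
    set c := (Finset.univ.filter fun j => Matrix.vecMul x G j = 1).card with hc
    have hcle : c ≤ q := by
      simpa using Finset.card_filter_le Finset.univ (fun j => Matrix.vecMul x G j = 1)
    have hS : ∑ j, ∏ i ∈ I, (-1 : ℝ) ^ (G i j).val = (q : ℝ) - 2 * c := by
      have : ∀ j, ∏ i ∈ I, (-1 : ℝ) ^ (G i j).val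
          = if Matrix.vecMul x G j = 1 then (-1 : ℝ) else 1 := by
        intro j
        rw [← chi_sum, ← hvec j]
        rcases zmod2_cases (Matrix.vecMul x G j) with h | h <;>
          simp [h, val2.1, val2.2.1]
      rw [Finset.sum_congr rfl (fun j _ => this j), Finset.sum_ite, hc]
      simp only [Finset.sum_const, Finset.sum_neg_distrib, smul_eq_mul, mul_one]
      rw [Finset.filter_not, Finset.card_sdiff_of_subset (Finset.filter_subset _ _),
        Finset.card_univ, Fintype.card_fin]
      simp only [nsmul_eq_mul, mul_neg_one, mul_one]
      rw [Nat.cast_sub hcle]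
      ring
    have hb := hbias I hIne
    rw [hS, abs_mul, abs_div, abs_one] at hb
    have hq' : (0 : ℝ) < q := by exact_mod_cast hq
    have habs : |(q : ℝ) - 2 * c| ≤ ε * q := by
      rw [abs_of_pos hq'] at hb
      calc |(q : ℝ) - 2 * c| = (1 / q) * |(q : ℝ) - 2 * c| * q := by
            field_simp
        _ ≤ ε * q := by
            apply mul_le_mul_of_nonneg_right hb (le_of_lt hq')
    rw [abs_le] at habs
    constructor <;> [nlinarith [habs.2]; nlinarith [habs.1]]
  refine ⟨?_, key⟩
  rw [Fintype.linearIndependent_iff]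
  intro g hg i
  by_contra hgi
  have hgne : g ≠ 0 := fun h => hgi (by rw [h]; rfl)
  have h1 := (key g hgne).1
  have hzero : ∀ j, Matrix.vecMul g G j = 0 := by
    intro j
    have := congrFun hg j
    simpa [Matrix.vecMul, dotProduct, Finset.sum_apply] using this
  have : (Finset.univ.filter fun j => Matrix.vecMul g G j = 1).card = 0 := by
    rw [Finset.card_eq_zero]
    apply Finset.filter_eq_empty_iff.mpr
    intro j _
    rw [hzero j]
    exact zero_ne_one
  rw [this] at h1
  have hq' : (0:ℝ) < q := by exact_mod_cast hq
  nlinarith [h1, hq']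
end

section
/- Every ε-biased multiset 𝒳 ⊆ {±1}^n of size q with q ≤ 2^{n−1} satisfies q ≥ 1/(2ε²); equivalently, the entropy H = log₂ q satisfies H ≥ log₂(1/ε²) − 1, so H ≥ min{log(1/ε), n−1} up to constants. -/
open Finset

/-- Any `ε`-biased multiset `𝒳 ⊆ {±1}ⁿ` of size `q ≤ 2^{n-1}` satisfies `q ≥ 1/(2ε²)`,
i.e. its entropy `H = log₂ q` is at least `log₂(1/ε²) - 1`. -/
theorem biased_set_entropy_bound (n q : ℕ) (hn : 1 ≤ n) (hq : 0 < q)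
    (hqn : q ≤ 2 ^ (n - 1)) (ε : ℝ)
    (x : Fin q → Fin n → ℝ)
    (hpm : ∀ j i, x j i = 1 ∨ x j i = -1)
    (hbias : ∀ I : Finset (Fin n), I.Nonempty →
      |(1 / (q : ℝ)) * ∑ j, ∏ i ∈ I, x j i| ≤ ε) :
    1 / (2 * ε ^ 2) ≤ (q : ℝ) := by
  have hfin : Nonempty (Fin n) := ⟨⟨0, hn⟩⟩
  have hεnn : 0 ≤ ε :=
    le_trans (abs_nonneg _) (hbias Finset.univ Finset.univ_nonempty)
  rcases eq_or_lt_of_le hεnn with h | hε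
  · rw [← h]; norm_num
  have hq' : (0:ℝ) < (q:ℕ) := by exact_mod_cast hq
  set S : Finset (Fin n) → ℝ := fun I => ∑ j, ∏ i ∈ I, x j i with hS
  -- expand sums of squares
  have key1 : ∀ j k, (∑ I : Finset (Fin n), ∏ i ∈ I, (x j i * x k i))
      = ∏ i, (x j i * x k i + 1) := by
    intro j k
    rw [Finset.prod_add, Finset.powerset_univ]
    simp
  have step : ∀ I : Finset (Fin n), (S I)^2 = ∑ j, ∑ k, ∏ i ∈ I, (x j i * x k i) := by
    intro I
    simp only [hS, sq, Finset.sum_mul_sum, ← Finset.prod_mul_distrib]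
  have key2 : ∑ I : Finset (Fin n), (S I)^2
      = ∑ j, ∑ k, ∏ i, (x j i * x k i + 1) := by
    calc ∑ I : Finset (Fin n), (S I)^2
        = ∑ I : Finset (Fin n), ∑ j, ∑ k, ∏ i ∈ I, (x j i * x k i) :=
          Finset.sum_congr rfl fun I _ => step I
      _ = ∑ j, ∑ I : Finset (Fin n), ∑ k, ∏ i ∈ I, (x j i * x k i) := Finset.sum_comm
      _ = ∑ j, ∑ k, ∑ I : Finset (Fin n), ∏ i ∈ I, (x j i * x k i) :=
          Finset.sum_congr rfl fun j _ => Finset.sum_comm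
      _ = ∑ j, ∑ k, ∏ i, (x j i * x k i + 1) :=
          Finset.sum_congr rfl fun j _ => Finset.sum_congr rfl fun k _ => key1 j k
  have hnn : ∀ j k i, (0:ℝ) ≤ x j i * x k i + 1 := by
    intro j k i
    rcases hpm j i with h1 | h1 <;> rcases hpm k i with h2 | h2 <;>
      rw [h1, h2] <;> norm_num
  have hdiag : ∀ j, ∏ i, (x j i * x j i + 1) = (2:ℝ) ^ n := by
    intro j
    have h2 : ∀ i, x j i * x j i + 1 = (2:ℝ) := fun i => by
      rcases hpm j i with h1 | h1 <;> rw [h1] <;> norm_num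
    simp [h2]
  have key3 : (q:ℝ) * 2 ^ n ≤ ∑ j, ∑ k, ∏ i, (x j i * x k i + 1) := by
    calc (q:ℝ) * 2 ^ n = ∑ _j : Fin q, (2:ℝ) ^ n := by
          simp [mul_comm]
      _ ≤ ∑ j, ∑ k, ∏ i, (x j i * x k i + 1) := by
          apply Finset.sum_le_sum
          intro j _
          rw [← hdiag j]
          exact Finset.single_le_sum
            (fun k _ => Finset.prod_nonneg fun i _ => hnn j k i) (Finset.mem_univ j)
  -- upper bound
  have hSempty : S ∅ = (q:ℝ) := by simp [hS]
  have hSbound : ∀ I : Finset (Fin n), I.Nonempty → (S I)^2 ≤ ε^2 * (q:ℝ)^2 := by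
    intro I hI
    have h := hbias I hI
    have habs : |S I| ≤ ε * q := by
      rw [abs_mul, abs_div, abs_one, abs_of_pos hq', div_mul_eq_mul_div,
        div_le_iff₀ hq', one_mul] at h
      exact h
    calc (S I)^2 = |S I|^2 := (sq_abs _).symm
      _ ≤ (ε * q)^2 := by
          apply pow_le_pow_left₀ (abs_nonneg _) habs
      _ = ε^2 * (q:ℝ)^2 := by ring
  have hcard : ((Finset.univ : Finset (Finset (Fin n))).erase ∅).card = 2 ^ n - 1 := by
    rw [Finset.card_erase_of_mem (Finset.mem_univ _), Finset.card_univ]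
    simp [Fintype.card_finset]
  have key4 : ∑ I : Finset (Fin n), (S I)^2
      ≤ (q:ℝ)^2 + ((2:ℝ)^n - 1) * (ε^2 * (q:ℝ)^2) := by
    rw [← Finset.add_sum_erase _ _ (Finset.mem_univ (∅ : Finset (Fin n))), hSempty]
    gcongr
    calc ∑ I ∈ (Finset.univ : Finset (Finset (Fin n))).erase ∅, (S I)^2
        ≤ ∑ _I ∈ (Finset.univ : Finset (Finset (Fin n))).erase ∅, ε^2 * (q:ℝ)^2 := by
          apply Finset.sum_le_sum
          intro I hI
          exact hSbound I (Finset.nonempty_iff_ne_empty.mpr (Finset.ne_of_mem_erase hI))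
      _ = ((2:ℝ)^n - 1) * (ε^2 * (q:ℝ)^2) := by
          rw [Finset.sum_const, hcard, nsmul_eq_mul]
          congr 1
          have : (1:ℕ) ≤ 2 ^ n := Nat.one_le_two_pow
          push_cast [this]
          ring
  -- combine
  have main : (q:ℝ) * 2 ^ n ≤ (q:ℝ)^2 + ((2:ℝ)^n - 1) * (ε^2 * (q:ℝ)^2) :=
    le_trans key3 (key2 ▸ key4)
  have hqN : (q:ℝ) ≤ (2:ℝ)^n / 2 := by
    have : ((q:ℝ)) ≤ ((2:ℕ) ^ (n-1) : ℕ) := by exact_mod_cast hqn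
    calc (q:ℝ) ≤ ((2:ℕ) ^ (n-1) : ℕ) := this
      _ = (2:ℝ)^(n-1) := by push_cast; ring
      _ = (2:ℝ)^n / 2 := by
          rw [eq_div_iff (by norm_num : (2:ℝ) ≠ 0), ← pow_succ]
          congr 1
          omega
  have hN2 : (2:ℝ) ≤ (2:ℝ)^n := by
    calc (2:ℝ) = 2^1 := by norm_num
      _ ≤ 2^n := by apply pow_le_pow_right₀ (by norm_num) hn
  rw [div_le_iff₀ (by positivity)]
  nlinarith [main, hqN, hN2, hq', mul_pos hq' hq', sq_nonneg ε,
    mul_nonneg (sq_nonneg ε) (sq_nonneg (q:ℝ)),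
    mul_pos (pow_pos (by norm_num : (0:ℝ) < 2) n) hq',
    mul_le_mul_of_nonneg_right hqN hq'.le]
end

section
/- Let p be an odd prime and suppose |∑_{n=0}^{t−1} (n+d₁/p)⋯(n+d_k/p)| ≤ 9k p^{1/2} log p for all valid parameters (Davenport-type bound). If X is drawn uniformly from {0,…,2^H − 1} with 2^H + MN ≤ p, then for every nonempty I ⊆ {1,…,MN}, |E[∏_{i∈I} ((X+i)/p)]| ≤ 2^{−H} |I| p^{1/2} · 9 log p; in particular, the Legendre symbols {((X+i)/p)}_{i=1}^{MN} form an ε-biased sequence with ε = 9·2^{−H} MN p^{1/2} log p. -/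
open Finset

/-- Assuming the Davenport-type bound on truncated products of Legendre symbols, if `X` is
drawn uniformly from `{0, …, 2^H - 1}` with `2^H + MN ≤ p`, then for every nonempty
`I ⊆ {1, …, MN}` the average `|E[∏_{i∈I} ((X+i)/p)]| ≤ 2^{-H} |I| √p · 9 log p`; in
particular the Legendre symbols `((X+i)/p)` form an `ε`-biased sequence with
`ε = 9 · 2^{-H} MN √p log p`. -/
theorem legendre_small_bias (p : ℕ) [Fact p.Prime] (hp : p ≠ 2)
    (H M N : ℕ) (hle : 2 ^ H + M * N ≤ p)
    (hdav : ∀ (k : ℕ), 1 ≤ k → ∀ (d : Fin k → ℕ), StrictMono d →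
      (∀ a, 0 < d a ∧ d a < p) → ∀ t : ℕ, 1 ≤ t → (∀ a, t ≤ p - d a) →
      |∑ n ∈ Finset.range t, ∏ a, (legendreSym p ((n : ℤ) + d a) : ℝ)|
        ≤ 9 * k * Real.sqrt p * Real.log p) :
    (∀ I : Finset ℕ, I.Nonempty → I ⊆ Finset.Icc 1 (M * N) →
      |(1 / (2 ^ H : ℝ)) * ∑ x ∈ Finset.range (2 ^ H),
          ∏ i ∈ I, (legendreSym p ((x : ℤ) + i) : ℝ)|
        ≤ (1 / (2 ^ H : ℝ)) * I.card * Real.sqrt p * (9 * Real.log p)) ∧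
    ∀ I : Finset ℕ, I.Nonempty → I ⊆ Finset.Icc 1 (M * N) →
      |(1 / (2 ^ H : ℝ)) * ∑ x ∈ Finset.range (2 ^ H),
          ∏ i ∈ I, (legendreSym p ((x : ℤ) + i) : ℝ)|
        ≤ 9 * (1 / (2 ^ H : ℝ)) * (M * N) * Real.sqrt p * Real.log p := by
  have hp2 : (2 : ℕ) ≤ p := (Fact.out : p.Prime).two_le
  have key : ∀ I : Finset ℕ, I.Nonempty → I ⊆ Finset.Icc 1 (M * N) →
      |(1 / (2 ^ H : ℝ)) * ∑ x ∈ Finset.range (2 ^ H),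
          ∏ i ∈ I, (legendreSym p ((x : ℤ) + i) : ℝ)|
        ≤ (1 / (2 ^ H : ℝ)) * I.card * Real.sqrt p * (9 * Real.log p) := by
    intro I hne hsub
    set k := I.card with hk
    have hk1 : 1 ≤ k := Finset.card_pos.mpr hne
    set d : Fin k → ℕ := fun a => I.orderEmbOfFin rfl a with hd
    have hmem : ∀ a, d a ∈ I := fun a => I.orderEmbOfFin_mem rfl a
    have hbd : ∀ a, 1 ≤ d a ∧ d a ≤ M * N := by
      intro a
      have := hsub (hmem a)
      simpa using Finset.mem_Icc.mp this
    have hsm : StrictMono d := (I.orderEmbOfFin rfl).strictMono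
    have h2H : 1 ≤ 2 ^ H := Nat.one_le_two_pow
    have hdp : ∀ a, 0 < d a ∧ d a < p := by
      intro a
      refine ⟨(hbd a).1, ?_⟩
      calc d a ≤ M * N := (hbd a).2
        _ < p := by omega
    have ht : ∀ a, 2 ^ H ≤ p - d a := by
      intro a
      have := (hbd a).2
      omega
    have hprod : ∀ n : ℕ, (∏ a, (legendreSym p ((n : ℤ) + d a) : ℝ))
        = ∏ i ∈ I, (legendreSym p ((n : ℤ) + i) : ℝ) := by
      intro n
      rw [← Finset.prod_coe_sort I (fun i => (legendreSym p ((n : ℤ) + i) : ℝ))]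
      exact Fintype.prod_equiv (I.orderIsoOfFin rfl).toEquiv _ _ fun a => by
        simp [d, Finset.coe_orderIsoOfFin_apply]
    have hmain := hdav k hk1 d hsm hdp (2 ^ H) h2H ht
    rw [show (∑ n ∈ Finset.range (2 ^ H), ∏ a, (legendreSym p ((n : ℤ) + d a) : ℝ))
        = ∑ x ∈ Finset.range (2 ^ H), ∏ i ∈ I, (legendreSym p ((x : ℤ) + i) : ℝ) from
      Finset.sum_congr rfl fun n _ => hprod n] at hmain
    have hpos : (0 : ℝ) < 2 ^ H := by positivity
    rw [abs_mul, abs_of_pos (by positivity : (0:ℝ) < 1 / (2 ^ H : ℝ))]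
    calc 1 / (2 ^ H : ℝ) * |∑ x ∈ Finset.range (2 ^ H),
          ∏ i ∈ I, (legendreSym p ((x : ℤ) + i) : ℝ)|
        ≤ 1 / (2 ^ H : ℝ) * (9 * k * Real.sqrt p * Real.log p) := by
          apply mul_le_mul_of_nonneg_left hmain (by positivity)
      _ = (1 / (2 ^ H : ℝ)) * k * Real.sqrt p * (9 * Real.log p) := by ring
  refine ⟨key, fun I hne hsub => ?_⟩
  refine (key I hne hsub).trans ?_
  have hcard : (I.card : ℝ) ≤ (M * N : ℕ) := by
    exact_mod_cast (Finset.card_le_card hsub).trans (by simp)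
  have hlog : 0 ≤ Real.log p := Real.log_nonneg (by exact_mod_cast Nat.one_le_of_lt hp2)
  have h1 : (0:ℝ) ≤ 1 / (2 ^ H : ℝ) := by positivity
  have := mul_le_mul_of_nonneg_left hcard h1
  calc (1 / (2 ^ H : ℝ)) * I.card * Real.sqrt p * (9 * Real.log p)
      ≤ (1 / (2 ^ H : ℝ)) * (M * N : ℕ) * Real.sqrt p * (9 * Real.log p) := by
        apply mul_le_mul_of_nonneg_right _ (by positivity)
        apply mul_le_mul_of_nonneg_right this (Real.sqrt_nonneg _)
    _ = 9 * (1 / (2 ^ H : ℝ)) * (M * N) * Real.sqrt p * Real.log p := by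
        push_cast; ring
end

section
/- For even q with 2 ≤ q ≤ M and even M ≥ 2, and any θ > 0, the quantity (q−1)!!(M+q−2)!!/((Mθ)^q (M−2)!!) is at most q² (8q/(e M θ²))^{q/2}; in particular, choosing q to be the smallest even integer ≥ Mθ²/8 gives the bound (Mθ²/8)² · e^{−Mθ²/16} (up to adjusting constants for the rounding of q). -/
/-!
The ratio `(M + q - 2)‼ / (M - 2)‼` is a product of `q / 2` factors, each at most `2 M`, and
`(q - 1)‼ ≤ q‼` is a product of `q / 2` factors, each at most `q`. Hence the left-hand side is at
most `(2 q / (M θ²)) ^ (q / 2)`, and `e ≤ 4` turns the `2` into `8 / e`; the factor `q² ≥ 1`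
is slack.
-/

open scoped Nat

namespace Nat

theorem doubleFactorial_le_doubleFactorial_succ : ∀ n : ℕ, n‼ ≤ (n + 1)‼
  | 0 => le_rfl
  | 1 => by decide
  | n + 2 => by
    rw [doubleFactorial_add_two, doubleFactorial_add_two (n + 1)]
    exact Nat.mul_le_mul (by omega) (doubleFactorial_le_doubleFactorial_succ n)

theorem doubleFactorial_add_two_mul_le (m k : ℕ) : (m + 2 * k)‼ ≤ (m + 2 * k) ^ k * m‼ := by
  induction k with
  | zero => simp
  | succ k ih =>
    rw [show m + 2 * (k + 1) = m + 2 * k + 2 by ring, doubleFactorial_add_two, pow_succ',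
      mul_assoc]
    exact Nat.mul_le_mul_left _
      (ih.trans (Nat.mul_le_mul_right _ (Nat.pow_le_pow_left (by omega) _)))

theorem doubleFactorial_sub_one_le_pow {q : ℕ} (hq : Even q) : (q - 1)‼ ≤ q ^ (q / 2) := by
  obtain ⟨k, rfl⟩ := hq.two_dvd
  rcases k.eq_zero_or_pos with rfl | hk
  · rfl
  calc (2 * k - 1)‼ ≤ (2 * k - 1 + 1)‼ := doubleFactorial_le_doubleFactorial_succ _
    _ = (0 + 2 * k)‼ := by congr 1; omega
    _ ≤ (2 * k) ^ (2 * k / 2) := by simpa using doubleFactorial_add_two_mul_le 0 k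

theorem doubleFactorial_add_sub_two_le {q M : ℕ} (hqM : q ≤ M) (hq : Even q) :
    (M + q - 2)‼ ≤ (2 * M) ^ (q / 2) * (M - 2)‼ := by
  obtain ⟨k, rfl⟩ := hq.two_dvd
  calc (M + 2 * k - 2)‼ = (M - 2 + 2 * k)‼ := by congr 1; omega
    _ ≤ (M - 2 + 2 * k) ^ k * (M - 2)‼ := doubleFactorial_add_two_mul_le _ _
    _ ≤ (2 * M) ^ (2 * k / 2) * (M - 2)‼ := by
      rw [Nat.mul_div_cancel_left k two_pos]; gcongr; omega

end Nat

theorem double_factorial_moment_bound_general (q M : ℕ) (hq2 : 2 ≤ q) (hqM : q ≤ M)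
    (hqe : Even q) (θ : ℝ) :
    ((q - 1).doubleFactorial * (M + q - 2).doubleFactorial : ℝ) /
        (((M : ℝ) * θ) ^ q * ((M - 2).doubleFactorial : ℝ))
      ≤ (q : ℝ) ^ 2 * (8 * q / (Real.exp 1 * M * θ ^ 2)) ^ (q / 2) := by
  have hM : (0 : ℝ) < M := by exact_mod_cast (by omega : 0 < M)
  have hD : (0 : ℝ) < (M - 2)‼ := by exact_mod_cast Nat.doubleFactorial_pos _
  have hden : ((M : ℝ) * θ) ^ q = (M * θ ^ 2 * M) ^ (q / 2) := by
    rw [show (M : ℝ) * θ ^ 2 * M = (M * θ) ^ 2 by ring, ← pow_mul, Nat.two_mul_div_two_of_even hqe]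
  have hnum : ((q - 1)‼ * (M + q - 2)‼ : ℝ) ≤ (q * (2 * M)) ^ (q / 2) * (M - 2)‼ := by
    rw [mul_pow, mul_assoc]
    exact_mod_cast Nat.mul_le_mul (Nat.doubleFactorial_sub_one_le_pow hqe)
      (Nat.doubleFactorial_add_sub_two_le hqM hqe)
  have he : 2 ≤ 8 / Real.exp 1 := by
    rw [le_div_iff₀ (Real.exp_pos 1)]; linarith [Real.exp_one_lt_d9]
  calc _ ≤ ((q * (2 * M)) ^ (q / 2) * (M - 2)‼ : ℝ) / ((M * θ) ^ q * (M - 2)‼) := by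
        gcongr ?_ / _
        exact mul_nonneg (hqe.pow_nonneg _) hD.le
    _ = (2 * q / (M * θ ^ 2)) ^ (q / 2) := by
        rw [mul_div_mul_right _ _ hD.ne', hden, ← div_pow, ← mul_assoc, mul_comm (q : ℝ) 2,
          mul_div_mul_right _ _ hM.ne']
    _ ≤ (8 / Real.exp 1 * q / (M * θ ^ 2)) ^ (q / 2) := by gcongr
    _ = (8 * q / (Real.exp 1 * M * θ ^ 2)) ^ (q / 2) := by
        rw [div_mul_eq_mul_div, div_div, mul_assoc]
    _ ≤ _ := le_mul_of_one_le_left (by positivity)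
        (one_le_pow₀ (by exact_mod_cast (by omega : 1 ≤ q)))

/-- For even `q` with `2 ≤ q ≤ M`, even `M`, and `θ > 0`,
`(q-1)!! (M+q-2)!! / ((Mθ)^q (M-2)!!) ≤ q² (8q/(e M θ²))^{q/2}`. -/
theorem double_factorial_moment_bound (q M : ℕ) (hq2 : 2 ≤ q) (hqM : q ≤ M)
    (hqe : Even q) (hMe : Even M) (θ : ℝ) (hθ : 0 < θ) :
    ((q - 1).doubleFactorial * (M + q - 2).doubleFactorial : ℝ) /
        (((M : ℝ) * θ) ^ q * ((M - 2).doubleFactorial : ℝ))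
      ≤ (q : ℝ) ^ 2 * (8 * q / (Real.exp 1 * M * θ ^ 2)) ^ (q / 2) :=
  double_factorial_moment_bound_general q M hq2 hqM hqe θ
end

section
/- Let Φ be an M×N random matrix whose entries are ε-biased ±1/√M Bernoulli random variables, and fix disjoint I, J ⊆ {1,…,N} with |I|,|J| ≤ K. Then for any θ > 0 and any even positive integer q, Pr[|⟨∑_{i∈I} φ_i, ∑_{j∈J} φ_j⟩| > θ(|I||J|)^{1/2}] ≤ (q−1)!!(M+q−2)!!/((Mθ)^q (M−2)!!) + ε (|I||J|)^{q/2}/θ^q, for M even. -/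
/-!
Write `W = ∑ₘ (∑_{i∈I} X_{m,i}) (∑_{j∈J} X_{m,j})`, so that the inner product in the event is
`W / M`, and apply Markov's inequality to `W^q`. Expanding `W^q` gives one term `E ∏ X` for each
choice of rows `m : [q] → [M]` and columns `i : [q] → I`, `j : [q] → J`. If every entry `(m, n)`
occurs an even number of times the product is `1`; otherwise the ε-bias bounds its expectation by
`ε`. As `I` and `J` are disjoint, the even terms are those where both `k ↦ (m k, i k)` and
`k ↦ (m k, j k)` have even fibres.

Such an `i` is invariant under a fixed-point-free involution (a pairing) of `[q]` preserving `m`,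
so there are at most `P(m) |I|^{q/2}` of them, where `P(m) ≤ ∏_v (|m⁻¹ v| - 1)!!` counts those
pairings. Double counting, `∑ₘ P(m)² = ∑_σ ∑_{m ∘ σ = m} P(m)`, and the identity
`∑_{f : [r] → [M]} ∏_v (2|f⁻¹ v| - 1)!! = M (M + 2) ⋯ (M + 2r - 2)` (the `r`-th moment of a
`χ²_M` variable) bound the number of even terms by `(q-1)!! (|I||J|)^{q/2} M (M+2) ⋯ (M+q-2)`.
-/

open Finset Function MeasureTheory
open scoped Nat

section Pairing

variable {κ V : Type*}

def IsPairingOn (s : Finset κ) (σ : κ → κ) : Prop :=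
  Involutive σ ∧ ∀ k, σ k = k ↔ k ∉ s

instance [Fintype κ] [DecidableEq κ] (s : Finset κ) : DecidablePred (IsPairingOn s) := fun _ => by
  unfold IsPairingOn Involutive; infer_instance

variable {s : Finset κ} {σ : κ → κ} {b b' : κ}

theorem IsPairingOn.apply_mem (hσ : IsPairingOn s σ) {k : κ} (hk : k ∈ s) : σ k ∈ s := by
  by_contra h
  have := (hσ.2 (σ k)).2 h
  rw [hσ.1 k] at this
  exact (hσ.2 k).1 this.symm hk

theorem IsPairingOn.apply_ne (hσ : IsPairingOn s σ) {k : κ} (hk : k ∈ s) : σ k ≠ k :=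
  fun h => (hσ.2 k).1 h hk

variable [DecidableEq κ]

theorem comp_swap_eq {h : κ → V} (hh : h b = h b') : h ∘ Equiv.swap b b' = h := by
  funext k
  simp only [comp_apply, Equiv.swap_apply_def]
  split_ifs <;> simp_all

theorem IsPairingOn.swap_comp (hσ : IsPairingOn ((s.erase b).erase b') σ) (hb : b ∈ s)
    (hb' : b' ∈ s) (hne : b ≠ b') : IsPairingOn s (Equiv.swap b b' ∘ σ) := by
  have hσb : σ b = b := (hσ.2 b).2 (by simp)
  have hσb' : σ b' = b' := (hσ.2 b').2 (by simp)
  have hcomm : ∀ k, σ (Equiv.swap b b' k) = Equiv.swap b b' (σ k) := fun k => by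
    rw [hσ.1.injective.map_swap, hσb, hσb']
  refine ⟨fun k => by simp [hcomm, hσ.1 k], fun k => ?_⟩
  rw [comp_apply, Equiv.swap_apply_eq_iff]
  by_cases hk : k = b ∨ k = b'
  · rcases hk with rfl | rfl <;> simp [hσb, hσb', hne, hne.symm, hb, hb']
  · rw [not_or] at hk
    rw [Equiv.swap_apply_of_ne_of_ne hk.1 hk.2, hσ.2 k]
    simp [hk.1, hk.2]

theorem IsPairingOn.erase_swap_comp (hσ : IsPairingOn s σ) (hb : b ∈ s) :
    IsPairingOn ((s.erase b).erase (σ b)) (Equiv.swap b (σ b) ∘ σ) := by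
  have hcomm : ∀ k, σ (Equiv.swap b (σ b) k) = Equiv.swap b (σ b) (σ k) := fun k => by
    rw [hσ.1.injective.map_swap, hσ.1 b, Equiv.swap_comm]
  refine ⟨fun k => by simp [hcomm, hσ.1 k], fun k => ?_⟩
  rw [comp_apply, Equiv.swap_apply_eq_iff]
  by_cases hk : k = b ∨ k = σ b
  · rcases hk with rfl | rfl <;> simp [hσ.1 _]
  · rw [not_or] at hk
    rw [Equiv.swap_apply_of_ne_of_ne hk.1 hk.2, hσ.2 k]
    simp [hk.1, hk.2]

variable [DecidableEq V] {h : κ → V}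

theorem card_filter_erase_erase (hb : b ∈ s) (hb' : b' ∈ s) (hne : b ≠ b') (hh : h b = h b')
    (v : V) :
    #{k ∈ (s.erase b).erase b' | h k = v} + (if h b = v then 2 else 0) = #{k ∈ s | h k = v} := by
  rw [filter_erase, filter_erase]
  split_ifs with hv
  · have hb₁ : b ∈ {k ∈ s | h k = v} := mem_filter.2 ⟨hb, hv⟩
    have hb'₁ : b' ∈ {k ∈ s | h k = v}.erase b :=
      mem_erase.2 ⟨hne.symm, mem_filter.2 ⟨hb', hh ▸ hv⟩⟩
    have := card_pos.2 ⟨b', hb'₁⟩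
    rw [card_erase_of_mem hb₁] at this
    rw [card_erase_of_mem hb'₁, card_erase_of_mem hb₁]
    omega
  · rw [erase_eq_of_notMem (by simp [hh ▸ hv]), erase_eq_of_notMem (by simp [hv]), add_zero]

theorem exists_isPairingOn_comp_eq (h : κ → V) (s : Finset κ)
    (he : ∀ v, Even #{k ∈ s | h k = v}) : ∃ σ, IsPairingOn s σ ∧ h ∘ σ = h := by
  induction s using Finset.strongInduction with
  | H s ih =>
  rcases s.eq_empty_or_nonempty with rfl | ⟨b, hb⟩
  · exact ⟨id, ⟨fun _ => rfl, by simp⟩, rfl⟩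
  obtain ⟨b', hb', hne, hh⟩ : ∃ b' ∈ s, b ≠ b' ∧ h b = h b' := by
    have hpos : 0 < #{k ∈ s | h k = h b} := card_pos.2 ⟨b, by simp [hb]⟩
    obtain ⟨b', hb'⟩ : ({k ∈ s | h k = h b}.erase b).Nonempty := by
      rw [← card_pos, card_erase_of_mem (by simp [hb])]
      obtain ⟨c, hc⟩ := he (h b)
      omega
    simp only [mem_erase, mem_filter] at hb'
    exact ⟨b', hb'.2.1, Ne.symm hb'.1, hb'.2.2.symm⟩
  have hsub : (s.erase b).erase b' ⊂ s := (erase_subset _ _).trans_ssubset (erase_ssubset hb)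
  obtain ⟨σ, hσ, hσh⟩ := ih _ hsub fun v => by
    have := card_filter_erase_erase hb hb' hne hh v
    split_ifs at this
    · exact (Nat.even_add.1 (this ▸ he v)).2 even_two
    · rw [add_zero] at this
      exact this ▸ he v
  exact ⟨_, hσ.swap_comp hb hb' hne, by rw [← comp_assoc, comp_swap_eq hh, hσh]⟩

omit [DecidableEq κ] in
theorem prod_doubleFactorial_mul [Fintype V] {n n' : V → ℕ} (v₀ : V)
    (hn : ∀ v, n' v + (if v₀ = v then 2 else 0) = n v) :
    (∏ v, (n' v - 1)‼) * (n v₀ - 1) = ∏ v, (n v - 1)‼ := by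
  have hrest : ∏ v ∈ univ.erase v₀, (n' v - 1)‼ = ∏ v ∈ univ.erase v₀, (n v - 1)‼ :=
    prod_congr rfl fun v hv => by rw [← hn v, if_neg (ne_of_mem_erase hv).symm, add_zero]
  have h₀ := hn v₀
  rw [if_pos rfl] at h₀
  rw [← mul_prod_erase univ _ (mem_univ v₀), ← mul_prod_erase univ _ (mem_univ v₀), hrest, ← h₀,
    show n' v₀ + 2 - 1 = n' v₀ + 1 by omega, Nat.doubleFactorial_add_one]
  ring

theorem card_isPairingOn_comp_eq_le [Fintype κ] [Fintype V] (h : κ → V) (s : Finset κ) :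
    #{σ | IsPairingOn s σ ∧ h ∘ σ = h} ≤ ∏ v, (#{k ∈ s | h k = v} - 1)‼ := by
  induction s using Finset.strongInduction with
  | H s ih =>
  rcases s.eq_empty_or_nonempty with rfl | ⟨b, hb⟩
  · refine (card_le_one.2 fun σ hσ τ hτ => ?_).trans (by simp)
    obtain ⟨-, ⟨-, hσ⟩, -⟩ := mem_filter.1 hσ
    obtain ⟨-, ⟨-, hτ⟩, -⟩ := mem_filter.1 hτ
    exact funext fun k => ((hσ k).2 (notMem_empty k)).trans ((hτ k).2 (notMem_empty k)).symm
  set A : Finset (κ → κ) := {σ | IsPairingOn s σ ∧ h ∘ σ = h}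
  set F := {k ∈ s | h k = h b}.erase b
  have hF : #F = #{k ∈ s | h k = h b} - 1 := card_erase_of_mem (by simp [hb])
  -- `σ ↦ swap b b' ∘ σ` maps the pairings with `σ b = b'` injectively to pairings of `s \ {b, b'}`.
  have hfiber : ∀ b' ∈ F, #{σ ∈ A | σ b = b'} ≤ (∏ v, (#{k ∈ s | h k = v} - 1)‼) / #F := by
    intro b' hb'F
    obtain ⟨hne, hb', hh⟩ : b' ≠ b ∧ b' ∈ s ∧ h b' = h b := by
      simpa [F, and_assoc] using hb'F
    have hpos : 0 < #{k ∈ s | h k = h b} - 1 := hF ▸ card_pos.2 ⟨b', hb'F⟩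
    rw [hF, ← prod_doubleFactorial_mul (h b) (card_filter_erase_erase hb hb' hne.symm hh.symm),
      Nat.mul_div_cancel _ hpos]
    refine (card_le_card_of_injOn (Equiv.swap b b' ∘ ·) (fun σ hσ => ?_)
      (Equiv.swap b b').injective.comp_left.injOn).trans
      (ih _ ((erase_subset _ _).trans_ssubset (erase_ssubset hb)))
    simp only [A, coe_filter, mem_filter, mem_univ, true_and] at hσ ⊢
    obtain ⟨⟨hσ, hσh⟩, rfl⟩ := hσ
    exact ⟨hσ.erase_swap_comp hb, by rw [← comp_assoc, comp_swap_eq hh.symm, hσh]⟩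
  calc #A = ∑ b' ∈ F, #{σ ∈ A | σ b = b'} := card_eq_sum_card_fiberwise fun σ hσ => by
        simp only [A, coe_filter, mem_univ, true_and] at hσ
        simp [F, hσ.1.apply_ne hb, hσ.1.apply_mem hb, show h (σ b) = h b from congrFun hσ.2 b]
    _ ≤ #F * ((∏ v, (#{k ∈ s | h k = v} - 1)‼) / #F) := by simpa using sum_le_sum hfiber
    _ ≤ ∏ v, (#{k ∈ s | h k = v} - 1)‼ := Nat.mul_div_le _ _

theorem card_isPairingOn_le [Fintype κ] (s : Finset κ) : #{σ | IsPairingOn s σ} ≤ (#s - 1)‼ := by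
  simpa using card_isPairingOn_comp_eq_le (fun _ => ()) s

end Pairing

theorem sum_prod_doubleFactorial_two_mul_card_fiber (V : Type*) [Fintype V] [DecidableEq V]
    (r : ℕ) :
    ∑ f : Fin r → V, ∏ v, (2 * #{t | f t = v} - 1)‼ = ∏ t ∈ range r, (Fintype.card V + 2 * t) := by
  induction r with
  | zero => simp
  | succ r ih =>
  have hfiber : ∀ (v : V) (g : Fin r → V) (w : V),
      #{t | (Fin.cons v g : Fin (r + 1) → V) t = w} = #{t | g t = w} + if v = w then 1 else 0 := by
    intro v g w
    simp only [card_filter, Fin.sum_univ_succ, Fin.cons_zero, Fin.cons_succ]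
    ring
  have hstep : ∀ (v : V) (g : Fin r → V),
      ∏ w, (2 * #{t | (Fin.cons v g : Fin (r + 1) → V) t = w} - 1)‼ =
        (2 * #{t | g t = v} + 1) * ∏ w, (2 * #{t | g t = w} - 1)‼ := by
    intro v g
    rw [← mul_prod_erase univ _ (mem_univ v), ← mul_prod_erase univ _ (mem_univ v), ← mul_assoc,
      prod_congr rfl fun w hw => by rw [hfiber, if_neg (ne_of_mem_erase hw).symm, add_zero],
      hfiber, if_pos rfl, show 2 * (#{t | g t = v} + 1) - 1 = 2 * #{t | g t = v} + 1 by omega,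
      Nat.doubleFactorial_add_one]
  have hcard : ∀ g : Fin r → V, ∑ v, #{t | g t = v} = r := fun g => by
    rw [← card_eq_sum_card_fiberwise fun t _ => mem_univ (g t), card_univ, Fintype.card_fin]
  calc ∑ f : Fin (r + 1) → V, ∏ v, (2 * #{t | f t = v} - 1)‼
      = ∑ v, ∑ g : Fin r → V, (2 * #{t | g t = v} + 1) * ∏ w, (2 * #{t | g t = w} - 1)‼ := by
        rw [← (Fin.consEquiv fun _ => V).sum_comp, Fintype.sum_prod_type]
        simp only [Fin.consEquiv_apply, hstep]
    _ = ∑ g : Fin r → V, (Fintype.card V + 2 * r) * ∏ w, (2 * #{t | g t = w} - 1)‼ := by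
        rw [sum_comm]
        refine sum_congr rfl fun g _ => ?_
        rw [← sum_mul, sum_add_distrib, ← mul_sum, hcard, sum_const, card_univ, smul_eq_mul,
          mul_one, add_comm]
    _ = ∏ t ∈ range (r + 1), (Fintype.card V + 2 * t) := by
        rw [← mul_sum, ih, prod_range_succ, mul_comm]

theorem card_filter_of_equiv {κ ρ : Type*} [Fintype ρ] {R : Finset κ} (e : ρ ≃ R)
    (p : κ → Prop) [DecidablePred p] : #{k ∈ R | p k} = #{t | p (e t)} := by
  refine card_bij' (fun k hk => e.symm ⟨k, (mem_filter.1 hk).1⟩) (fun t _ => (e t).1)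
    (fun k hk => ?_) (fun t ht => ?_) (fun k hk => ?_) (fun t ht => ?_)
  · simpa using (mem_filter.1 hk).2
  · simp_all
  · simp
  · simp

section PairMins

variable {κ β : Type*} [Fintype κ] [LinearOrder κ] {σ : κ → κ}

def pairMins (σ : κ → κ) : Finset κ := {k | k < σ k}

theorem notMem_pairMins_iff (hσ : IsPairingOn univ σ) {k : κ} :
    k ∉ pairMins σ ↔ σ k ∈ pairMins σ := by
  simp only [pairMins, mem_filter_univ, not_lt, hσ.1 k]
  exact ⟨fun h => lt_of_le_of_ne h (hσ.apply_ne (mem_univ k)), le_of_lt⟩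

theorem min_mem_pairMins (hσ : IsPairingOn univ σ) (k : κ) : min k (σ k) ∈ pairMins σ := by
  have hne := hσ.apply_ne (mem_univ k)
  rcases le_total k (σ k) with h | h
  · simpa [pairMins, min_eq_left h] using lt_of_le_of_ne h hne.symm
  · simpa [pairMins, min_eq_right h, hσ.1 k] using lt_of_le_of_ne h hne

omit [Fintype κ] in
theorem apply_min_eq {m : κ → β} (hm : m ∘ σ = m) (k : κ) : m (min k (σ k)) = m k := by
  rcases min_choice k (σ k) with h | h <;> rw [h]
  exact congrFun hm k

theorem card_filter_eq_two_mul [DecidableEq β] (hσ : IsPairingOn univ σ) {m : κ → β}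
    (hm : m ∘ σ = m) (v : β) : #{k | m k = v} = 2 * #{k ∈ pairMins σ | m k = v} := by
  rw [← card_filter_add_card_filter_not (· ∈ pairMins σ), filter_filter, filter_filter, two_mul]
  congr 1
  · congr 1
    ext k
    simp [and_comm]
  · refine card_nbij' σ σ (fun k hk => ?_) (fun k hk => ?_) (fun k _ => hσ.1 k) (fun k _ => hσ.1 k)
    all_goals simp only [coe_filter, Set.mem_ofPred_eq] at hk ⊢
    · exact ⟨(notMem_pairMins_iff hσ).1 hk.2.2, (congrFun hm k).trans hk.2.1⟩
    · exact ⟨mem_univ _, (congrFun hm k).trans hk.2,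
        by rw [notMem_pairMins_iff hσ, hσ.1 k]; exact hk.1⟩

theorem two_mul_card_pairMins (hσ : IsPairingOn univ σ) : 2 * #(pairMins σ) = Fintype.card κ := by
  simpa using (card_filter_eq_two_mul hσ (m := fun _ => ()) rfl ()).symm

theorem card_filter_piFinset_comp_eq_le {ι : Type*} [DecidableEq ι] (hσ : IsPairingOn univ σ)
    (I : Finset ι) :
    #{i ∈ Fintype.piFinset fun _ : κ => I | i ∘ σ = i} ≤ #I ^ (Fintype.card κ / 2) := by
  calc #{i ∈ Fintype.piFinset fun _ : κ => I | i ∘ σ = i}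
      ≤ #(Fintype.piFinset fun _ : pairMins σ => I) := by
        refine card_le_card_of_injOn (fun i k => i k) (fun i hi => ?_) fun i hi i' hi' hii' => ?_
        · simp only [coe_filter, Fintype.mem_piFinset, Set.mem_ofPred_eq] at hi
          exact mem_coe.2 (Fintype.mem_piFinset.2 fun k => hi.1 k)
        · simp only [coe_filter, Set.mem_ofPred_eq] at hi hi'
          funext k
          rw [← apply_min_eq hi.2, ← apply_min_eq hi'.2]
          exact congrFun hii' ⟨_, min_mem_pairMins hσ k⟩
    _ = #I ^ (Fintype.card κ / 2) := by
        rw [Fintype.card_piFinset, prod_const, card_univ, Fintype.card_coe]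
        have := two_mul_card_pairMins hσ
        congr 1
        omega

theorem sum_filter_comp_eq_prod_doubleFactorial (V : Type*) [Fintype V] [DecidableEq V]
    (hσ : IsPairingOn univ σ) :
    ∑ m ∈ {m : κ → V | m ∘ σ = m}, ∏ v, (#{k | m k = v} - 1)‼ =
      ∏ t ∈ range (Fintype.card κ / 2), (Fintype.card V + 2 * t) := by
  have hcard : Fintype.card κ / 2 = #(pairMins σ) := by
    have := two_mul_card_pairMins hσ
    omega
  set e := (pairMins σ).equivFin.symm
  rw [hcard, ← sum_prod_doubleFactorial_two_mul_card_fiber V]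
  refine sum_nbij' (fun m t => m (e t)) (fun f k => f (e.symm ⟨_, min_mem_pairMins hσ k⟩))
    (fun _ _ => mem_coe.2 (mem_univ _)) (fun f _ => ?_) (fun m hm => ?_) (fun f _ => ?_)
    (fun m hm => ?_)
  · rw [mem_filter_univ]
    funext k
    simp only [comp_apply, hσ.1 k, min_comm]
  · rw [mem_filter_univ] at hm
    funext k
    simp [apply_min_eq hm]
  · funext t
    have := (e t).2
    simp only [pairMins, mem_filter_univ] at this
    show f (e.symm _) = f t
    congr 1
    rw [Equiv.symm_apply_eq]
    ext
    exact min_eq_left this.le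
  · rw [mem_filter_univ] at hm
    refine prod_congr rfl fun v _ => ?_
    rw [card_filter_eq_two_mul hσ hm, card_filter_of_equiv e]

end PairMins

section EvenFibers

variable {κ α : Type*} [Fintype κ] [DecidableEq α]

def HasEvenFibers (g : κ → α) : Prop := ∀ a, Even #{k | g k = a}

instance [Fintype α] : DecidablePred (HasEvenFibers : (κ → α) → Prop) := fun _ => by
  unfold HasEvenFibers; infer_instance

theorem HasEvenFibers.sumElim {κ' : Type*} [Fintype κ'] {a : κ → α} {b : κ' → α}
    (hab : ∀ k k', a k ≠ b k') (h : HasEvenFibers (Sum.elim a b)) :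
    HasEvenFibers a ∧ HasEvenFibers b := by
  have hcard : ∀ v, #{u | Sum.elim a b u = v} = #{k | a k = v} + #{k | b k = v} := fun v => by
    simp only [card_filter, Fintype.sum_sum_type, Sum.elim_inl, Sum.elim_inr]
    rfl
  have hzero : ∀ v, #{k | a k = v} = 0 ∨ #{k | b k = v} = 0 := fun v => by
    by_contra! hne
    obtain ⟨k, hk⟩ := card_ne_zero.1 hne.1
    obtain ⟨k', hk'⟩ := card_ne_zero.1 hne.2
    exact hab k k' (((mem_filter_univ _).1 hk).trans ((mem_filter_univ _).1 hk').symm)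
  refine ⟨fun v => ?_, fun v => ?_⟩ <;> have hv := hcard v ▸ h v <;>
    rcases hzero v with h0 | h0 <;> simp_all

variable [LinearOrder κ] {V ι ι' : Type*} [Fintype V] [DecidableEq V] [Fintype ι] [DecidableEq ι]
  [Fintype ι'] [DecidableEq ι']

theorem card_filter_hasEvenFibers_le (m : κ → V) (I : Finset ι) :
    #{i ∈ Fintype.piFinset fun _ => I | HasEvenFibers fun k => (m k, i k)} ≤
      #{σ | IsPairingOn univ σ ∧ m ∘ σ = m} * #I ^ (Fintype.card κ / 2) := by
  calc #{i ∈ Fintype.piFinset fun _ => I | HasEvenFibers fun k => (m k, i k)}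
      ≤ #(({σ | IsPairingOn univ σ ∧ m ∘ σ = m} : Finset (κ → κ)).biUnion
          fun σ => {i ∈ Fintype.piFinset fun _ => I | i ∘ σ = i}) := by
        refine card_le_card fun i hi => ?_
        rw [mem_filter] at hi
        obtain ⟨σ, hσ, hσi⟩ := exists_isPairingOn_comp_eq _ univ hi.2
        refine mem_biUnion.2 ⟨σ, ?_, mem_filter.2 ⟨hi.1, ?_⟩⟩
        · exact (mem_filter_univ _).2 ⟨hσ, funext fun k => congrArg Prod.fst (congrFun hσi k)⟩
        · exact funext fun k => congrArg Prod.snd (congrFun hσi k)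
    _ ≤ ∑ σ ∈ ({σ | IsPairingOn univ σ ∧ m ∘ σ = m} : Finset (κ → κ)),
          #{i ∈ Fintype.piFinset fun _ => I | i ∘ σ = i} := card_biUnion_le
    _ ≤ #{σ | IsPairingOn univ σ ∧ m ∘ σ = m} * #I ^ (Fintype.card κ / 2) := by
        rw [← smul_eq_mul, ← sum_const]
        exact sum_le_sum fun σ hσ =>
          card_filter_piFinset_comp_eq_le ((mem_filter_univ σ).1 hσ).1 I

theorem sum_card_filter_hasEvenFibers_mul_le (I : Finset ι) (J : Finset ι') :
    ∑ m : κ → V, #{i ∈ Fintype.piFinset fun _ => I | HasEvenFibers fun k => (m k, i k)} *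
        #{j ∈ Fintype.piFinset fun _ => J | HasEvenFibers fun k => (m k, j k)} ≤
      (Fintype.card κ - 1)‼ * (#I * #J) ^ (Fintype.card κ / 2) *
        ∏ t ∈ range (Fintype.card κ / 2), (Fintype.card V + 2 * t) := by
  set r := Fintype.card κ / 2
  set P : (κ → V) → ℕ := fun m => #{σ | IsPairingOn univ σ ∧ m ∘ σ = m}
  calc _ ≤ ∑ m : κ → V, (P m * #I ^ r) * (P m * #J ^ r) := sum_le_sum fun m _ =>
        Nat.mul_le_mul (card_filter_hasEvenFibers_le m I) (card_filter_hasEvenFibers_le m J)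
    _ = (#I * #J) ^ r *
          ∑ m : κ → V, ∑ σ ∈ ({σ | IsPairingOn univ σ ∧ m ∘ σ = m} : Finset _), P m := by
        rw [mul_sum]
        refine sum_congr rfl fun m _ => ?_
        rw [sum_const, smul_eq_mul]
        ring
    _ = (#I * #J) ^ r * ∑ σ ∈ ({σ | IsPairingOn univ σ} : Finset (κ → κ)),
          ∑ m ∈ ({m | m ∘ σ = m} : Finset (κ → V)), P m := by
        rw [sum_comm' (t' := {σ | IsPairingOn univ σ}) (s' := fun σ => {m | m ∘ σ = m})
          fun m σ => by simp [and_comm]]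
    _ ≤ (#I * #J) ^ r * ∑ σ ∈ ({σ | IsPairingOn univ σ} : Finset (κ → κ)),
          ∑ m ∈ ({m | m ∘ σ = m} : Finset (κ → V)), ∏ v, (#{k | m k = v} - 1)‼ := by
        gcongr with σ _ m _
        exact card_isPairingOn_comp_eq_le m univ
    _ = (#I * #J) ^ r * ∑ σ ∈ ({σ | IsPairingOn univ σ} : Finset (κ → κ)),
          ∏ t ∈ range r, (Fintype.card V + 2 * t) := by
        congr 1
        exact sum_congr rfl fun σ hσ =>
          sum_filter_comp_eq_prod_doubleFactorial V ((mem_filter_univ σ).1 hσ)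
    _ ≤ (#I * #J) ^ r * ((Fintype.card κ - 1)‼ * ∏ t ∈ range r, (Fintype.card V + 2 * t)) := by
        rw [sum_const, smul_eq_mul]
        gcongr
        simpa using card_isPairingOn_le (univ : Finset κ)
    _ = _ := by ring

end EvenFibers

theorem pow_eq_ite_odd {M : Type*} [Monoid M] {x : M} (hx : x * x = 1) (n : ℕ) :
    x ^ n = if Odd n then x else 1 := by
  obtain ⟨c, rfl | rfl⟩ := Nat.even_or_odd' n
  · simp [pow_mul, sq, hx]
  · simp [pow_succ, pow_mul, hx]

theorem prod_comp_eq_prod_odd_fibers {κ α M : Type*} [Fintype κ] [Fintype α] [DecidableEq α]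
    [CommMonoid M] (x : α → M) (hx : ∀ a, x a * x a = 1) (g : κ → α) :
    ∏ k, x (g k) = ∏ a ∈ ({a | Odd #{k | g k = a}} : Finset α), x a := by
  rw [prod_filter, ← prod_fiberwise' univ g x]
  exact prod_congr rfl fun a _ => by rw [prod_const, pow_eq_ite_odd (hx a)]

theorem sum_mul_sum_pow {R ν ι : Type*} [CommSemiring R] [Fintype ν] (x : ν × ι → R)
    (I J : Finset ι) (q : ℕ) :
    (∑ m, (∑ i ∈ I, x (m, i)) * ∑ j ∈ J, x (m, j)) ^ q =
      ∑ m : Fin q → ν, ∑ i ∈ Fintype.piFinset fun _ => I, ∑ j ∈ Fintype.piFinset fun _ => J,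
        ∏ u, x (Sum.elim (fun k => (m k, i k)) (fun k => (m k, j k)) u) := by
  rw [← Fin.prod_const, Fintype.prod_sum]
  refine sum_congr rfl fun m _ => ?_
  rw [prod_mul_distrib, prod_univ_sum, prod_univ_sum, sum_mul_sum]
  simp [Fintype.prod_sum_type]

section Moments

variable {Ω : Type*} [MeasurableSpace Ω] {μ : Measure Ω}

theorem measureReal_lt_abs_le_integral_pow_div [IsFiniteMeasure μ] {f : Ω → ℝ} {q : ℕ}
    (hq : Even q) (hf : Integrable (fun ω => f ω ^ q) μ) {t : ℝ} (ht : 0 < t) :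
    μ.real {ω | t < |f ω|} ≤ (∫ ω, f ω ^ q ∂μ) / t ^ q := by
  rw [le_div_iff₀ (pow_pos ht q), mul_comm]
  refine le_trans (mul_le_mul_of_nonneg_left (measureReal_mono fun ω hω => ?_) (by positivity))
    (mul_meas_ge_le_integral_of_nonneg (ae_of_all _ fun ω => hq.pow_nonneg _) hf (t ^ q))
  rw [Set.mem_ofPred_eq, ← hq.pow_abs (f ω)]
  exact pow_le_pow_left₀ ht.le (le_of_lt hω) q

variable {α κ : Type*} [Fintype κ] {X : α → Ω → ℝ} {ε : ℝ}

theorem integrable_prod_comp [IsFiniteMeasure μ] (hmeas : ∀ a, Measurable (X a))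
    (hpm : ∀ a ω, X a ω = 1 ∨ X a ω = -1) (g : κ → α) :
    Integrable (fun ω => ∏ k, X (g k) ω) μ := by
  refine .of_bound (Finset.measurable_prod _ fun k _ => hmeas (g k)).aestronglyMeasurable 1
    (ae_of_all _ fun ω => ?_)
  rw [Real.norm_eq_abs, abs_prod]
  exact (prod_eq_one fun k _ => by rcases hpm (g k) ω with h | h <;> simp [h]).le

theorem integral_prod_comp_le [Fintype α] [DecidableEq α] [IsProbabilityMeasure μ]
    (hpm : ∀ a ω, X a ω = 1 ∨ X a ω = -1)
    (hbias : ∀ S : Finset α, S.Nonempty → |∫ ω, ∏ a ∈ S, X a ω ∂μ| ≤ ε) (g : κ → α) :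
    ∫ ω, ∏ k, X (g k) ω ∂μ ≤ if HasEvenFibers g then 1 else ε := by
  have hx : ∀ ω a, X a ω * X a ω = 1 := fun ω a => by rcases hpm a ω with h | h <;> simp [h]
  simp_rw [prod_comp_eq_prod_odd_fibers (X · _) (hx _) g]
  split_ifs with he
  · simp [filter_false_of_mem fun a _ => Nat.not_odd_iff_even.2 (he a)]
  · obtain ⟨a, ha⟩ := not_forall.1 he
    exact (le_abs_self _).trans (hbias _ ⟨a, (mem_filter_univ a).2 (Nat.not_even_iff_odd.1 ha)⟩)

theorem integral_prod_sumElim_le [Fintype α] [DecidableEq α] [IsProbabilityMeasure μ]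
    {κ' : Type*} [Fintype κ'] (hpm : ∀ a ω, X a ω = 1 ∨ X a ω = -1)
    (hbias : ∀ S : Finset α, S.Nonempty → |∫ ω, ∏ a ∈ S, X a ω ∂μ| ≤ ε) (hε : 0 ≤ ε)
    {a : κ → α} {b : κ' → α} (hab : ∀ k k', a k ≠ b k') :
    ∫ ω, ∏ u, X (Sum.elim a b u) ω ∂μ ≤
      (if HasEvenFibers a then 1 else 0) * (if HasEvenFibers b then 1 else 0) + ε := by
  refine (integral_prod_comp_le hpm hbias _).trans ?_
  by_cases h : HasEvenFibers (Sum.elim a b)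
  · obtain ⟨ha, hb⟩ := h.sumElim hab
    simp [h, ha, hb, hε]
  · rw [if_neg h]
    exact le_add_of_nonneg_left (by positivity)

end Moments

section CrossMoments

variable {Ω ν ι : Type*} [MeasurableSpace Ω] {μ : Measure Ω} [Fintype ν]
  {X : ν × ι → Ω → ℝ} {ε : ℝ} {I J : Finset ι}

theorem integrable_sum_mul_sum_pow [IsFiniteMeasure μ] (hmeas : ∀ p, Measurable (X p))
    (hpm : ∀ p ω, X p ω = 1 ∨ X p ω = -1) (q : ℕ) :
    Integrable (fun ω => (∑ m, (∑ i ∈ I, X (m, i) ω) * ∑ j ∈ J, X (m, j) ω) ^ q) μ := by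
  have hexp := funext fun ω => sum_mul_sum_pow (fun p => X p ω) I J q
  beta_reduce at hexp
  rw [hexp]
  exact integrable_finsetSum _ fun m _ => integrable_finsetSum _ fun i _ =>
    integrable_finsetSum _ fun j _ => integrable_prod_comp hmeas hpm _

variable [DecidableEq ν] [Fintype ι] [DecidableEq ι]

theorem integral_sum_mul_sum_pow_le [IsProbabilityMeasure μ] (hmeas : ∀ p, Measurable (X p))
    (hpm : ∀ p ω, X p ω = 1 ∨ X p ω = -1)
    (hbias : ∀ S : Finset (ν × ι), S.Nonempty → |∫ ω, ∏ p ∈ S, X p ω ∂μ| ≤ ε) (hε : 0 ≤ ε)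
    (hIJ : Disjoint I J) (q : ℕ) :
    ∫ ω, (∑ m, (∑ i ∈ I, X (m, i) ω) * ∑ j ∈ J, X (m, j) ω) ^ q ∂μ ≤
      ((∑ m : Fin q → ν, #{i ∈ Fintype.piFinset fun _ => I | HasEvenFibers fun k => (m k, i k)} *
        #{j ∈ Fintype.piFinset fun _ => J | HasEvenFibers fun k => (m k, j k)} : ℕ) : ℝ) +
        ε * (Fintype.card ν * #I * #J) ^ q := by
  have hint : ∀ (m : Fin q → ν) (i j : Fin q → ι),
      Integrable (fun ω => ∏ u, X (Sum.elim (fun k => (m k, i k)) (fun k => (m k, j k)) u) ω) μ :=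
    fun m i j => integrable_prod_comp hmeas hpm _
  have hexp := funext fun ω => sum_mul_sum_pow (fun p => X p ω) I J q
  beta_reduce at hexp
  calc _ = ∑ m : Fin q → ν, ∑ i ∈ Fintype.piFinset fun _ => I, ∑ j ∈ Fintype.piFinset fun _ => J,
        ∫ ω, ∏ u, X (Sum.elim (fun k => (m k, i k)) (fun k => (m k, j k)) u) ω ∂μ := by
        rw [hexp, integral_finsetSum _ fun m _ => integrable_finsetSum _ fun i _ =>
          integrable_finsetSum _ fun j _ => hint m i j]
        refine sum_congr rfl fun m _ => ?_
        rw [integral_finsetSum _ fun i _ => integrable_finsetSum _ fun j _ => hint m i j]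
        exact sum_congr rfl fun i _ => integral_finsetSum _ fun j _ => hint m i j
    _ ≤ ∑ m : Fin q → ν, ∑ i ∈ Fintype.piFinset fun _ => I, ∑ j ∈ Fintype.piFinset fun _ => J,
        ((if HasEvenFibers fun k => (m k, i k) then 1 else 0) *
          (if HasEvenFibers fun k => (m k, j k) then 1 else 0) + ε) := by
        gcongr with m _ i hi j hj
        exact integral_prod_sumElim_le hpm hbias hε fun k k' h => disjoint_left.1 hIJ
          (Fintype.mem_piFinset.1 hi k) ((Prod.mk.inj h).2 ▸ Fintype.mem_piFinset.1 hj k')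
    _ = _ := by
        simp only [sum_add_distrib, ← sum_mul_sum, sum_boole, sum_const, Fintype.card_piFinset,
          prod_const, card_univ, Fintype.card_fun, Fintype.card_fin, nsmul_eq_mul]
        push_cast
        ring

theorem measureReal_lt_abs_sum_mul_sum_le [LinearOrder ν] [IsProbabilityMeasure μ]
    (hmeas : ∀ p, Measurable (X p)) (hpm : ∀ p ω, X p ω = 1 ∨ X p ω = -1)
    (hbias : ∀ S : Finset (ν × ι), S.Nonempty → |∫ ω, ∏ p ∈ S, X p ω ∂μ| ≤ ε) (hε : 0 ≤ ε)
    (hIJ : Disjoint I J) {q : ℕ} (hq : Even q) {t : ℝ} (ht : 0 < t) :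
    μ.real {ω | t < |∑ m, (∑ i ∈ I, X (m, i) ω) * ∑ j ∈ J, X (m, j) ω|} ≤
      (((q - 1)‼ * (#I * #J) ^ (q / 2) * ∏ s ∈ range (q / 2), (Fintype.card ν + 2 * s) : ℕ) +
        ε * (Fintype.card ν * #I * #J) ^ q) / t ^ q := by
  refine (measureReal_lt_abs_le_integral_pow_div hq (integrable_sum_mul_sum_pow hmeas hpm q)
    ht).trans ?_
  gcongr
  refine (integral_sum_mul_sum_pow_le hmeas hpm hbias hε hIJ q).trans ?_
  gcongr
  simpa using sum_card_filter_hasEvenFibers_mul_le (κ := Fin q) (V := ν) I J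

end CrossMoments

theorem doubleFactorial_sub_two_mul_prod_range {M : ℕ} (hM : 0 < M) (r : ℕ) :
    (M - 2)‼ * ∏ t ∈ range r, (M + 2 * t) = (M + 2 * r - 2)‼ := by
  induction r with
  | zero => simp
  | succ r ih =>
    obtain ⟨n, hn⟩ : ∃ n, M + 2 * r = n + 1 := ⟨M + 2 * r - 1, by omega⟩
    rw [prod_range_succ, ← mul_assoc, ih, show M + 2 * (r + 1) - 2 = n + 1 by omega,
      Nat.doubleFactorial_add_one, show M + 2 * r - 2 = n - 1 by omega, ← hn, mul_comm]

theorem sum_sum_sum_div_sqrt_mul_div_sqrt {ν ι : Type*} [Fintype ν] (x : ν → ι → ℝ)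
    (I J : Finset ι) {M : ℝ} (hM : 0 ≤ M) :
    ∑ i ∈ I, ∑ j ∈ J, ∑ m, (x m i / √M) * (x m j / √M) =
      (∑ m, (∑ i ∈ I, x m i) * ∑ j ∈ J, x m j) / M := by
  simp_rw [div_mul_div_comm, Real.mul_self_sqrt hM, ← sum_div, sum_mul_sum]
  exact congrArg (· / M) ((sum_congr rfl fun i _ => sum_comm).trans sum_comm)

theorem biased_fro_probability_bound_general {Ω : Type*} [MeasurableSpace Ω]
    (μ : Measure Ω) [IsProbabilityMeasure μ]
    (M N : ℕ) (hM : 0 < M) (ε θ : ℝ) (hθ : 0 < θ)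
    (X : Fin M → Fin N → Ω → ℝ)
    (hmeas : ∀ m n, Measurable (X m n))
    (hpm : ∀ m n ω, X m n ω = 1 ∨ X m n ω = -1)
    (hbias : ∀ S : Finset (Fin M × Fin N), S.Nonempty →
      |∫ ω, ∏ p ∈ S, X p.1 p.2 ω ∂μ| ≤ ε)
    (I J : Finset (Fin N)) (hdisj : Disjoint I J)
    (q : ℕ) (hqe : Even q) (hq : 0 < q) :
    (μ {ω | θ * Real.sqrt ((I.card : ℝ) * J.card) <
        |∑ i ∈ I, ∑ j ∈ J, ∑ m, (X m i ω / Real.sqrt M) * (X m j ω / Real.sqrt M)|}).toReal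
      ≤ ((q - 1).doubleFactorial * (M + q - 2).doubleFactorial : ℝ) /
          (((M : ℝ) * θ) ^ q * ((M - 2).doubleFactorial : ℝ))
        + ε * ((I.card : ℝ) * J.card) ^ (q / 2) / θ ^ q := by
  obtain ⟨r, rfl⟩ := hqe.two_dvd
  rw [show 2 * r / 2 = r by omega]
  rcases I.eq_empty_or_nonempty with rfl | ⟨i₀, hi₀⟩
  · simp [zero_pow (show r ≠ 0 by omega)]
    positivity
  rcases J.eq_empty_or_nonempty with rfl | hJ
  · simp [zero_pow (show r ≠ 0 by omega)]
    positivity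
  have hε : 0 ≤ ε := (abs_nonneg _).trans (hbias {(⟨0, hM⟩, i₀)} (singleton_nonempty _))
  have hc : (0 : ℝ) < #I * #J := mul_pos (by exact_mod_cast card_pos.2 ⟨i₀, hi₀⟩)
    (by exact_mod_cast card_pos.2 hJ)
  have hM' : (0 : ℝ) < M := by exact_mod_cast hM
  calc _ = μ.real {ω | M * θ * √((#I : ℝ) * #J) <
          |∑ m, (∑ i ∈ I, X m i ω) * ∑ j ∈ J, X m j ω|} := by
        congr 2
        ext ω
        rw [Set.mem_ofPred_eq, Set.mem_ofPred_eq, sum_sum_sum_div_sqrt_mul_div_sqrt _ _ _ hM'.le,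
          abs_div, Nat.abs_cast, lt_div_iff₀ hM']
        ring_nf
    _ ≤ _ := measureReal_lt_abs_sum_mul_sum_le (X := fun p => X p.1 p.2) (fun p => hmeas _ _)
          (fun p => hpm _ _) hbias hε hdisj (even_two_mul r) (by positivity)
    _ = _ := by
        rw [Nat.mul_div_cancel_left r two_pos, Fintype.card_fin, mul_pow ((M : ℝ) * θ),
          pow_mul √((#I : ℝ) * #J), Real.sq_sqrt hc.le,
          ← doubleFactorial_sub_two_mul_prod_range hM r]
        push_cast
        field_simp
        ring

/-- Moment bound for flat restricted orthogonality of a matrix with `ε`-biased `±1/√M`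
entries: for disjoint `I, J` with `|I|, |J| ≤ K`, any `θ > 0` and even `q > 0`,
`Pr[|⟨∑_{i∈I} φ_i, ∑_{j∈J} φ_j⟩| > θ(|I||J|)^{1/2}]
  ≤ (q-1)!!(M+q-2)!!/((Mθ)^q (M-2)!!) + ε (|I||J|)^{q/2}/θ^q`. -/
theorem biased_fro_probability_bound {Ω : Type*} [MeasurableSpace Ω]
    (μ : Measure Ω) [IsProbabilityMeasure μ]
    (M N K : ℕ) (hM : 0 < M) (hMe : Even M) (ε θ : ℝ) (hθ : 0 < θ)
    (X : Fin M → Fin N → Ω → ℝ)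
    (hmeas : ∀ m n, Measurable (X m n))
    (hpm : ∀ m n ω, X m n ω = 1 ∨ X m n ω = -1)
    (hbias : ∀ S : Finset (Fin M × Fin N), S.Nonempty →
      |∫ ω, ∏ p ∈ S, X p.1 p.2 ω ∂μ| ≤ ε)
    (I J : Finset (Fin N)) (hdisj : Disjoint I J) (hI : I.card ≤ K) (hJ : J.card ≤ K)
    (q : ℕ) (hqe : Even q) (hq : 0 < q) :
    (μ {ω | θ * Real.sqrt ((I.card : ℝ) * J.card) <
        |∑ i ∈ I, ∑ j ∈ J, ∑ m, (X m i ω / Real.sqrt M) * (X m j ω / Real.sqrt M)|}).toReal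
      ≤ ((q - 1).doubleFactorial * (M + q - 2).doubleFactorial : ℝ) /
          (((M : ℝ) * θ) ^ q * ((M - 2).doubleFactorial : ℝ))
        + ε * ((I.card : ℝ) * J.card) ^ (q / 2) / θ ^ q :=
  biased_fro_probability_bound_general μ M N hM ε θ hθ X hmeas hpm hbias I J hdisj q hqe hq
end
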